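/- arXiv:1003.4561 — 5 statements merged into one kernel-verified Lean document; each statement's English description precedes it below -/
import Mathlib

section
/- For every positive integer k, there exists a set W ⊆ ℤ such that: (i) W is a B₂°[2] set; (ii) W is the union of k B₂[1] sets; and (iii) for every positive integer g, W cannot be written as the union of k − 1 B₂[g] sets. -/
/-- `S ⊆ G` is a `B₂[g]` set: every element has at most `g` representations as a sum
`a + b` with `a, b ∈ S`, counting representations differing only in order as one. -/
def IsB2 {G : Type} [AddCommGroup G] (g : ℕ) (S : Set G) : Prop :=
  ∀ ξ : G, {p : Sym2 G | ∃ a ∈ S, ∃ b ∈ S, p = s(a, b) ∧ a + b = ξ}.encard ≤ g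

/-- `S ⊆ G` is a `B₂°[g]` set: every nonzero element has at most `g` representations
as a difference `a - b` with `a, b ∈ S`. -/
def IsB2Circ {G : Type} [AddCommGroup G] (g : ℕ) (S : Set G) : Prop :=
  ∀ ξ : G, ξ ≠ 0 → {p : G × G | p.1 ∈ S ∧ p.2 ∈ S ∧ p.1 - p.2 = ξ}.encard ≤ g

namespace St5

/-- Digit positions: `(block, tag i | single (a,z) | pair (a,b,z))`. -/
abbrev Pos (k : ℕ) := ℕ × (Fin k ⊕ ((Fin k × ℕ) ⊕ (Fin k × Fin k × ℕ)))

noncomputable def enc {k : ℕ} : Pos k → ℕ := Encodable.encode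

lemma enc_inj {k : ℕ} : Function.Injective (enc (k := k)) :=
  Encodable.encode_injective

/-- Base-16 valuation of a coefficient vector. -/
noncomputable def val {k : ℕ} (f : Pos k →₀ ℤ) : ℤ := f.sum fun i c => c * 16 ^ enc i

lemma nat_digits_unique (f : ℕ →₀ ℤ) (hb : ∀ n, |f n| ≤ 7)
    (h0 : (f.sum fun n c => c * 16 ^ n) = 0) : f = 0 := by
  by_contra hne
  have hsupp : f.support.Nonempty := Finsupp.support_nonempty_iff.mpr hne
  set m := f.support.min' hsupp with hm
  have hmmem : m ∈ f.support := Finset.min'_mem _ _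
  have hsum : (f.sum fun n c => c * 16 ^ n)
      = f m * 16 ^ m + ∑ n ∈ f.support.erase m, f n * 16 ^ n := by
    rw [Finsupp.sum, ← Finset.add_sum_erase _ _ hmmem]
  have hdvd : (16:ℤ) ^ (m+1) ∣ ∑ n ∈ f.support.erase m, f n * 16 ^ n := by
    refine Finset.dvd_sum fun n hn => ?_
    have hn1 : n ∈ f.support := Finset.mem_of_mem_erase hn
    have hnm : m + 1 ≤ n :=
      Nat.succ_le_of_lt (lt_of_le_of_ne (Finset.min'_le _ _ hn1)
        (Ne.symm (Finset.ne_of_mem_erase hn)))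
    exact Dvd.dvd.mul_left (pow_dvd_pow _ hnm) _
  have h1 : f m * 16 ^ m = - ∑ n ∈ f.support.erase m, f n * 16 ^ n := by
    rw [hsum] at h0; linarith
  have hdvd2 : (16:ℤ) ^ (m+1) ∣ f m * 16 ^ m := by
    rw [h1]; exact dvd_neg.mpr hdvd
  have h16 : (16:ℤ) ∣ f m := by
    have : (16:ℤ) ^ m * 16 ∣ 16 ^ m * f m := by
      rw [mul_comm ((16:ℤ)^m) (f m)]
      simpa [pow_succ] using hdvd2
    exact (mul_dvd_mul_iff_left (a := (16:ℤ)^m) (by positivity)).mp this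
  have : f m = 0 := Int.eq_zero_of_abs_lt_dvd h16 (lt_of_le_of_lt (hb m) (by norm_num))
  exact (Finsupp.mem_support_iff.mp hmmem) this

lemma val_eq_zero {k : ℕ} (f : Pos k →₀ ℤ) (hb : ∀ i, |f i| ≤ 7) (h : val f = 0) : f = 0 := by
  set e : Pos k ↪ ℕ := ⟨enc, enc_inj⟩ with he
  have h2 : (Finsupp.embDomain e f) = 0 := by
    refine nat_digits_unique _ ?_ ?_
    · intro n
      by_cases hn : n ∈ (Finsupp.embDomain e f).support
      · rw [Finsupp.support_embDomain, Finset.mem_map] at hn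
        obtain ⟨i, hi, rfl⟩ := hn
        rw [Finsupp.embDomain_apply_self]; exact hb i
      · rw [Finsupp.notMem_support_iff.mp hn]; simp
    · rw [Finsupp.sum_embDomain]; exact h
  have := Finsupp.embDomain_injective e (M := ℤ)
  rw [← Finsupp.embDomain_zero e] at h2
  exact Finsupp.embDomain_injective e h2

lemma val_add {k : ℕ} (f g : Pos k →₀ ℤ) : val (f + g) = val f + val g := by
  unfold val
  rw [Finsupp.sum_add_index' (fun a => by simp) (fun a b c => by ring)]

lemma val_sub {k : ℕ} (f g : Pos k →₀ ℤ) : val (f - g) = val f - val g := by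
  unfold val
  rw [Finsupp.sum_sub_index (fun a b c => by ring)]


def tagP {k : ℕ} (g : ℕ) (i : Fin k) : Pos k := (g, Sum.inl i)
def sinP {k : ℕ} (g : ℕ) (a : Fin k) (z : ℕ) : Pos k := (g, Sum.inr (Sum.inl (a, z)))
def pairP {k : ℕ} (g : ℕ) (a b : Fin k) (z : ℕ) : Pos k := (g, Sum.inr (Sum.inr (a, b, z)))

@[simp] lemma tagP_inj {k g g' : ℕ} {i j : Fin k} :
    tagP g i = tagP g' j ↔ g = g' ∧ i = j := by
  unfold tagP; simp [Prod.ext_iff]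

@[simp] lemma sinP_inj {k g g' : ℕ} {a b : Fin k} {z z' : ℕ} :
    sinP g a z = sinP g' b z' ↔ g = g' ∧ a = b ∧ z = z' := by
  unfold sinP; simp [Prod.ext_iff]

@[simp] lemma pairP_inj {k g g' : ℕ} {a b a' b' : Fin k} {z z' : ℕ} :
    pairP g a b z = pairP g' a' b' z' ↔ g = g' ∧ a = a' ∧ b = b' ∧ z = z' := by
  unfold pairP; simp [Prod.ext_iff]

@[simp] lemma tagP_ne_sinP {k g g' : ℕ} {i a : Fin k} {z : ℕ} : tagP g i ≠ sinP g' a z := by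
  unfold tagP sinP; simp [Prod.ext_iff]
@[simp] lemma tagP_ne_pairP {k g g' : ℕ} {i a b : Fin k} {z : ℕ} : tagP g i ≠ pairP g' a b z := by
  unfold tagP pairP; simp [Prod.ext_iff]
@[simp] lemma sinP_ne_tagP {k g g' : ℕ} {i a : Fin k} {z : ℕ} : sinP g a z ≠ tagP g' i := by
  unfold tagP sinP; simp [Prod.ext_iff]
@[simp] lemma pairP_ne_tagP {k g g' : ℕ} {i a b : Fin k} {z : ℕ} : pairP g a b z ≠ tagP g' i := by
  unfold tagP pairP; simp [Prod.ext_iff]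
@[simp] lemma sinP_ne_pairP {k g g' : ℕ} {c a b : Fin k} {z z' : ℕ} :
    sinP g c z' ≠ pairP g' a b z := by
  unfold sinP pairP; simp [Prod.ext_iff]
@[simp] lemma pairP_ne_sinP {k g g' : ℕ} {c a b : Fin k} {z z' : ℕ} :
    pairP g' a b z ≠ sinP g c z' := by
  unfold sinP pairP; simp [Prod.ext_iff]

/-- The prime used in block `g` (for ambient parameter `k`). -/
noncomputable def pp (k g : ℕ) : ℕ :=
  (Nat.exists_infinite_primes ((g+1) * (k+1)^4 + 3)).choose

lemma pp_prime (k g : ℕ) : (pp k g).Prime :=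
  (Nat.exists_infinite_primes ((g+1) * (k+1)^4 + 3)).choose_spec.2

lemma pp_ge (k g : ℕ) : (g+1) * (k+1)^4 + 3 ≤ pp k g :=
  (Nat.exists_infinite_primes ((g+1) * (k+1)^4 + 3)).choose_spec.1

lemma pp_gt_two (k g : ℕ) : 2 < pp k g := by
  have h := pp_ge k g
  have h2 : 0 < (g+1) * (k+1)^4 := by positivity
  omega

instance pp_neZero (k g : ℕ) : NeZero (pp k g) := ⟨(pp_prime k g).pos.ne'⟩

instance pp_fact (k g : ℕ) : Fact (pp k g).Prime := ⟨pp_prime k g⟩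

lemma two_ne_zero_zmod (k g : ℕ) : (2 : ZMod (pp k g)) ≠ 0 := by
  have h := pp_gt_two k g
  intro h2
  have h3 : ((2:ℕ) : ZMod (pp k g)) = 0 := by exact_mod_cast h2
  rw [ZMod.natCast_eq_zero_iff] at h3
  have := Nat.le_of_dvd (by norm_num) h3
  omega

lemma half_cancel {k g : ℕ} {c : ZMod (pp k g)} (h : 2 * c = 0) : c = 0 := by
  rcases mul_eq_zero.mp h with h | h
  · exact absurd h (two_ne_zero_zmod k g)
  · exact h

def sg1 {k : ℕ} (i a : Fin k) : ℤ := if i = a then 1 else -1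

def sg2 {k : ℕ} (i : Fin k) (q : Fin k × Fin k) : ℤ := if i = q.1 ∨ i = q.2 then 1 else -1

def pairsF (k : ℕ) : Finset (Fin k × Fin k) := Finset.univ.filter fun q => q.1 < q.2

/-- The digit vector of the element indexed by block `g`, slot `i`, gadget `t`. -/
noncomputable def phi (k g : ℕ) (i : Fin k) (t : Fin k → ZMod (pp k g)) : Pos k →₀ ℤ :=
  Finsupp.single (tagP g i) 1
  + ∑ a : Fin k, Finsupp.single (sinP g a ((t a).val)) (sg1 i a)
  + ∑ q ∈ pairsF k, Finsupp.single (pairP g q.1 q.2 ((t q.1 + t q.2).val)) (sg2 i q)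

lemma phi_apply_tag (k g : ℕ) (i : Fin k) (t : Fin k → ZMod (pp k g)) (g' : ℕ) (j : Fin k) :
    phi k g i t (tagP g' j) = if g' = g ∧ j = i then 1 else 0 := by
  have h1 : (Finsupp.single (tagP g i) (1:ℤ)) (tagP g' j)
      = if g' = g ∧ j = i then 1 else 0 := by
    rw [Finsupp.single_apply]
    by_cases h : g' = g ∧ j = i
    · rw [if_pos (tagP_inj.mpr ⟨h.1.symm, h.2.symm⟩), if_pos h]
    · rw [if_neg (fun hc => h ⟨(tagP_inj.mp hc).1.symm, (tagP_inj.mp hc).2.symm⟩), if_neg h]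
  have h2 : (∑ a : Fin k, Finsupp.single (sinP g a ((t a).val)) (sg1 i a)) (tagP g' j) = 0 := by
    rw [Finsupp.finset_sum_apply]
    exact Finset.sum_eq_zero fun a _ => by rw [Finsupp.single_apply, if_neg sinP_ne_tagP]
  have h3 : (∑ q ∈ pairsF k,
      Finsupp.single (pairP g q.1 q.2 ((t q.1 + t q.2).val)) (sg2 i q)) (tagP g' j) = 0 := by
    rw [Finsupp.finset_sum_apply]
    exact Finset.sum_eq_zero fun q _ => by rw [Finsupp.single_apply, if_neg pairP_ne_tagP]
  unfold phi
  rw [Finsupp.add_apply, Finsupp.add_apply, h1, h2, h3, add_zero, add_zero]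

lemma phi_apply_single (k g : ℕ) (i : Fin k) (t : Fin k → ZMod (pp k g)) (a : Fin k) (z : ℕ) :
    phi k g i t (sinP g a z) = if z = (t a).val then sg1 i a else 0 := by
  have h1 : (Finsupp.single (tagP g i) (1:ℤ)) (sinP g a z) = 0 := by
    rw [Finsupp.single_apply, if_neg tagP_ne_sinP]
  have h3 : (∑ q ∈ pairsF k,
      Finsupp.single (pairP g q.1 q.2 ((t q.1 + t q.2).val)) (sg2 i q)) (sinP g a z) = 0 := by
    rw [Finsupp.finset_sum_apply]
    exact Finset.sum_eq_zero fun q _ => by rw [Finsupp.single_apply, if_neg pairP_ne_sinP]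
  have h2 : (∑ b : Fin k, Finsupp.single (sinP g b ((t b).val)) (sg1 i b)) (sinP g a z)
      = if z = (t a).val then sg1 i a else 0 := by
    rw [Finsupp.finset_sum_apply]
    rw [Finset.sum_eq_single a (fun b _ hb => by
        rw [Finsupp.single_apply, if_neg (fun hc => hb (sinP_inj.mp hc).2.1)])
      (fun h => absurd (Finset.mem_univ a) h)]
    rw [Finsupp.single_apply]
    by_cases h : z = (t a).val
    · rw [if_pos (sinP_inj.mpr ⟨rfl, rfl, h.symm⟩), if_pos h]
    · rw [if_neg (fun hc => h (sinP_inj.mp hc).2.2.symm), if_neg h]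
  unfold phi
  rw [Finsupp.add_apply, Finsupp.add_apply, h1, h2, h3, zero_add, add_zero]

lemma phi_apply_single_ne (k g : ℕ) (i : Fin k) (t : Fin k → ZMod (pp k g)) {g' : ℕ}
    (h : g' ≠ g) (a : Fin k) (z : ℕ) :
    phi k g i t (sinP g' a z) = 0 := by
  have h1 : (Finsupp.single (tagP g i) (1:ℤ)) (sinP g' a z) = 0 := by
    rw [Finsupp.single_apply, if_neg tagP_ne_sinP]
  have h3 : (∑ q ∈ pairsF k,
      Finsupp.single (pairP g q.1 q.2 ((t q.1 + t q.2).val)) (sg2 i q)) (sinP g' a z) = 0 := by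
    rw [Finsupp.finset_sum_apply]
    exact Finset.sum_eq_zero fun q _ => by rw [Finsupp.single_apply, if_neg pairP_ne_sinP]
  have h2 : (∑ b : Fin k, Finsupp.single (sinP g b ((t b).val)) (sg1 i b)) (sinP g' a z) = 0 := by
    rw [Finsupp.finset_sum_apply]
    exact Finset.sum_eq_zero fun b _ => by
      rw [Finsupp.single_apply, if_neg (fun hc => h ((sinP_inj.mp hc).1.symm))]
  unfold phi
  rw [Finsupp.add_apply, Finsupp.add_apply, h1, h2, h3, zero_add, add_zero]

lemma phi_apply_pair (k g : ℕ) (i : Fin k) (t : Fin k → ZMod (pp k g)) {a b : Fin k}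
    (hab : a < b) (z : ℕ) :
    phi k g i t (pairP g a b z) = if z = (t a + t b).val then sg2 i (a, b) else 0 := by
  have h1 : (Finsupp.single (tagP g i) (1:ℤ)) (pairP g a b z) = 0 := by
    rw [Finsupp.single_apply, if_neg tagP_ne_pairP]
  have h2 : (∑ c : Fin k, Finsupp.single (sinP g c ((t c).val)) (sg1 i c)) (pairP g a b z)
      = 0 := by
    rw [Finsupp.finset_sum_apply]
    exact Finset.sum_eq_zero fun c _ => by rw [Finsupp.single_apply, if_neg sinP_ne_pairP]
  have h3 : (∑ q ∈ pairsF k,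
      Finsupp.single (pairP g q.1 q.2 ((t q.1 + t q.2).val)) (sg2 i q)) (pairP g a b z)
      = if z = (t a + t b).val then sg2 i (a, b) else 0 := by
    rw [Finsupp.finset_sum_apply]
    rw [Finset.sum_eq_single (a, b) (fun q _ hq => by
        rw [Finsupp.single_apply, if_neg (fun hc => by
          obtain ⟨_, h1, h2, _⟩ := pairP_inj.mp hc
          exact hq (Prod.ext h1 h2))])
      (fun h => absurd (by
        rw [pairsF, Finset.mem_filter]; exact ⟨Finset.mem_univ _, hab⟩) h)]
    rw [Finsupp.single_apply]
    by_cases h : z = (t a + t b).val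
    · rw [if_pos (pairP_inj.mpr ⟨rfl, rfl, rfl, h.symm⟩), if_pos h]
    · rw [if_neg (fun hc => h (pairP_inj.mp hc).2.2.2.symm), if_neg h]
  unfold phi
  rw [Finsupp.add_apply, Finsupp.add_apply, h1, h2, h3, zero_add, zero_add]

lemma phi_apply_pair_ne (k g : ℕ) (i : Fin k) (t : Fin k → ZMod (pp k g)) {g' : ℕ}
    (h : g' ≠ g) (a b : Fin k) (z : ℕ) :
    phi k g i t (pairP g' a b z) = 0 := by
  have h1 : (Finsupp.single (tagP g i) (1:ℤ)) (pairP g' a b z) = 0 := by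
    rw [Finsupp.single_apply, if_neg tagP_ne_pairP]
  have h2 : (∑ c : Fin k, Finsupp.single (sinP g c ((t c).val)) (sg1 i c)) (pairP g' a b z)
      = 0 := by
    rw [Finsupp.finset_sum_apply]
    exact Finset.sum_eq_zero fun c _ => by rw [Finsupp.single_apply, if_neg sinP_ne_pairP]
  have h3 : (∑ q ∈ pairsF k,
      Finsupp.single (pairP g q.1 q.2 ((t q.1 + t q.2).val)) (sg2 i q)) (pairP g' a b z)
      = 0 := by
    rw [Finsupp.finset_sum_apply]
    exact Finset.sum_eq_zero fun q _ => by
      rw [Finsupp.single_apply, if_neg (fun hc => h ((pairP_inj.mp hc).1.symm))]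
  unfold phi
  rw [Finsupp.add_apply, Finsupp.add_apply, h1, h2, h3, zero_add, add_zero]

lemma phi_apply_pair_bad (k g : ℕ) (i : Fin k) (t : Fin k → ZMod (pp k g)) {a b : Fin k}
    (hab : ¬ a < b) (z : ℕ) :
    phi k g i t (pairP g a b z) = 0 := by
  have h1 : (Finsupp.single (tagP g i) (1:ℤ)) (pairP g a b z) = 0 := by
    rw [Finsupp.single_apply, if_neg tagP_ne_pairP]
  have h2 : (∑ c : Fin k, Finsupp.single (sinP g c ((t c).val)) (sg1 i c)) (pairP g a b z)
      = 0 := by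
    rw [Finsupp.finset_sum_apply]
    exact Finset.sum_eq_zero fun c _ => by rw [Finsupp.single_apply, if_neg sinP_ne_pairP]
  have h3 : (∑ q ∈ pairsF k,
      Finsupp.single (pairP g q.1 q.2 ((t q.1 + t q.2).val)) (sg2 i q)) (pairP g a b z)
      = 0 := by
    rw [Finsupp.finset_sum_apply]
    refine Finset.sum_eq_zero fun q hq => ?_
    rw [Finsupp.single_apply, if_neg]
    intro hc
    obtain ⟨_, hc1, hc2, _⟩ := pairP_inj.mp hc
    rw [pairsF, Finset.mem_filter] at hq
    exact hab (hc1 ▸ hc2 ▸ hq.2)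
  unfold phi
  rw [Finsupp.add_apply, Finsupp.add_apply, h1, h2, h3, zero_add, add_zero]

lemma abs_sg1 {k : ℕ} (i a : Fin k) : |sg1 i a| ≤ 1 := by
  unfold sg1; split <;> norm_num

lemma abs_sg2 {k : ℕ} (i : Fin k) (q : Fin k × Fin k) : |sg2 i q| ≤ 1 := by
  unfold sg2; split <;> norm_num

lemma phi_bound (k g : ℕ) (i : Fin k) (t : Fin k → ZMod (pp k g)) (pos : Pos k) :
    |phi k g i t pos| ≤ 1 := by
  obtain ⟨g', x⟩ := pos
  rcases x with j | x
  · rw [show ((g', Sum.inl j) : Pos k) = tagP g' j from rfl, phi_apply_tag]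
    split <;> norm_num
  · rcases x with ⟨a, z⟩ | ⟨a, b, z⟩
    · rw [show ((g', Sum.inr (Sum.inl (a, z))) : Pos k) = sinP g' a z from rfl]
      by_cases h : g' = g
      · subst h; rw [phi_apply_single]
        split
        · exact abs_sg1 i a
        · norm_num
      · rw [phi_apply_single_ne _ _ _ _ h]; norm_num
    · rw [show ((g', Sum.inr (Sum.inr (a, b, z))) : Pos k) = pairP g' a b z from rfl]
      by_cases h : g' = g
      · subst h
        by_cases hab : a < b
        · rw [phi_apply_pair _ _ _ _ hab]
          split
          · exact abs_sg2 i (a, b)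
          · norm_num
        · rw [phi_apply_pair_bad _ _ _ _ hab]; norm_num
      · rw [phi_apply_pair_ne _ _ _ _ h]; norm_num

/-- The integer element of block `g`, slot `i`, gadget `t`. -/
noncomputable def w (k g : ℕ) (i : Fin k) (t : Fin k → ZMod (pp k g)) : ℤ := val (phi k g i t)

lemma phi_eq_of_sum_eq {k g₁ g₂ g₃ g₄ : ℕ} {i₁ i₂ i₃ i₄ : Fin k}
    {t₁ : Fin k → ZMod (pp k g₁)} {t₂ : Fin k → ZMod (pp k g₂)}
    {t₃ : Fin k → ZMod (pp k g₃)} {t₄ : Fin k → ZMod (pp k g₄)}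
    (h : w k g₁ i₁ t₁ + w k g₂ i₂ t₂ = w k g₃ i₃ t₃ + w k g₄ i₄ t₄) :
    phi k g₁ i₁ t₁ + phi k g₂ i₂ t₂ = phi k g₃ i₃ t₃ + phi k g₄ i₄ t₄ := by
  have hv : val ((phi k g₁ i₁ t₁ + phi k g₂ i₂ t₂) - (phi k g₃ i₃ t₃ + phi k g₄ i₄ t₄)) = 0 := by
    rw [val_sub, val_add, val_add]
    unfold w at h; linarith
  have hb : ∀ pos, |((phi k g₁ i₁ t₁ + phi k g₂ i₂ t₂)
      - (phi k g₃ i₃ t₃ + phi k g₄ i₄ t₄)) pos| ≤ 7 := by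
    intro pos
    simp only [Finsupp.sub_apply, Finsupp.add_apply]
    have b1 := phi_bound k g₁ i₁ t₁ pos
    have b2 := phi_bound k g₂ i₂ t₂ pos
    have b3 := phi_bound k g₃ i₃ t₃ pos
    have b4 := phi_bound k g₄ i₄ t₄ pos
    rw [abs_le] at *
    constructor <;> linarith
  have hz := val_eq_zero _ hb hv
  exact sub_eq_zero.mp hz

lemma sg1_ne_zero {k : ℕ} (i a : Fin k) : sg1 i a ≠ 0 := by
  unfold sg1; split <;> norm_num

lemma w_inj_idx {k g g' : ℕ} {i i' : Fin k} {t : Fin k → ZMod (pp k g)}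
    {t' : Fin k → ZMod (pp k g')} (h : w k g i t = w k g' i' t') : g = g' ∧ i = i' := by
  have H : phi k g i t + phi k g i t = phi k g' i' t' + phi k g' i' t' :=
    phi_eq_of_sum_eq (by rw [h])
  have h2 := DFunLike.congr_fun H (tagP g i)
  rw [Finsupp.add_apply, Finsupp.add_apply, phi_apply_tag, phi_apply_tag,
    if_pos ⟨rfl, rfl⟩] at h2
  by_cases hc : g = g' ∧ i = i'
  · exact hc
  · rw [if_neg hc] at h2; norm_num at h2

lemma w_inj_t {k g : ℕ} {i : Fin k} {t t' : Fin k → ZMod (pp k g)}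
    (h : w k g i t = w k g i t') : t = t' := by
  have H : phi k g i t + phi k g i t = phi k g i t' + phi k g i t' :=
    phi_eq_of_sum_eq (by rw [h])
  funext a
  have h2 := DFunLike.congr_fun H (sinP g a ((t a).val))
  rw [Finsupp.add_apply, Finsupp.add_apply, phi_apply_single, phi_apply_single,
    if_pos rfl] at h2
  by_cases hc : (t a).val = (t' a).val
  · exact ZMod.val_injective _ hc
  · rw [if_neg hc] at h2
    have := sg1_ne_zero i a
    omega

lemma ind_pp {α : Type*} [DecidableEq α] {t t' s s' : α}
    (h : ∀ z : α, ((if z = t then (1:ℤ) else 0) + (if z = t' then 1 else 0))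
      = ((if z = s then 1 else 0) + (if z = s' then 1 else 0))) :
    (s = t ∧ s' = t') ∨ (s = t' ∧ s' = t) := by
  by_cases e5 : t = t'
  · subst e5
    have h1 := h t
    rw [if_pos rfl] at h1
    by_cases e1 : t = s
    · by_cases e2 : t = s'
      · exact Or.inl ⟨e1.symm, e2.symm⟩
      · rw [if_pos e1, if_neg e2] at h1; norm_num at h1
    · rw [if_neg e1] at h1
      by_cases e2 : t = s'
      · rw [if_pos e2] at h1; norm_num at h1
      · rw [if_neg e2] at h1; norm_num at h1
  · have h1 := h t
    rw [if_pos rfl, if_neg e5] at h1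
    have h2 := h t'
    rw [if_neg (fun hc => e5 hc.symm), if_pos rfl] at h2
    by_cases e1 : t = s
    · left
      refine ⟨e1.symm, ?_⟩
      by_cases e2 : t' = s
      · exact absurd (e1.trans e2.symm) e5
      · rw [if_neg e2] at h2
        by_cases e3 : t' = s'
        · exact e3.symm
        · rw [if_neg e3] at h2; norm_num at h2
    · right
      rw [if_neg e1] at h1
      by_cases e2 : t = s'
      · refine ⟨?_, e2.symm⟩
        by_cases e3 : t' = s'
        · exact absurd (e2.trans e3.symm) e5
        · rw [if_neg e3] at h2
          by_cases e4 : t' = s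
          · exact e4.symm
          · rw [if_neg e4] at h2; norm_num at h2
      · rw [if_neg e2] at h1; norm_num at h1

lemma ind_pm {α : Type*} [DecidableEq α] {t t' s s' : α}
    (h : ∀ z : α, ((if z = t then (1:ℤ) else 0) - (if z = t' then 1 else 0))
      = ((if z = s then 1 else 0) - (if z = s' then 1 else 0))) :
    (t = t' ∧ s = s') ∨ (s = t ∧ s' = t') := by
  by_cases e5 : t = t'
  · left
    refine ⟨e5, ?_⟩
    subst e5
    have h1 := h s
    rw [sub_self, if_pos rfl] at h1
    by_cases e1 : s = s'
    · exact e1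
    · rw [if_neg e1] at h1; norm_num at h1
  · right
    have h1 := h t
    rw [if_pos rfl, if_neg e5] at h1
    have h2 := h t'
    rw [if_neg (fun hc => e5 hc.symm), if_pos rfl] at h2
    by_cases e1 : t = s
    · refine ⟨e1.symm, ?_⟩
      by_cases e3 : t' = s'
      · exact e3.symm
      · rw [if_neg e3] at h2
        by_cases e4 : t' = s
        · rw [if_pos e4] at h2; norm_num at h2
        · rw [if_neg e4] at h2; norm_num at h2
    · rw [if_neg e1] at h1
      by_cases e2 : t = s'
      · rw [if_pos e2] at h1; norm_num at h1
      · rw [if_neg e2] at h1; norm_num at h1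

noncomputable def chiz {k : ℕ} (g : ℕ) (x y : Fin k) : Fin k → ZMod (pp k g) :=
  fun a => if a = x then 1 else if a = y then -1 else 0

lemma sg2_comm {k : ℕ} (i a b : Fin k) : sg2 i (a, b) = sg2 i (b, a) := by
  unfold sg2; simp [or_comm]

section Matched

variable {k g : ℕ} {x y : Fin k} {t t' s s' : Fin k → ZMod (pp k g)}

lemma cond_single' (H : phi k g x t + phi k g y t' = phi k g x s + phi k g y s') (a : Fin k) :
    ∀ z : ZMod (pp k g),
      (if z = t a then sg1 x a else 0) + (if z = t' a then sg1 y a else 0)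
        = (if z = s a then sg1 x a else 0) + (if z = s' a then sg1 y a else 0) := by
  intro z
  have h := DFunLike.congr_fun H (sinP g a z.val)
  rw [Finsupp.add_apply, Finsupp.add_apply, phi_apply_single, phi_apply_single,
    phi_apply_single, phi_apply_single] at h
  simpa only [(ZMod.val_injective (pp k g)).eq_iff] using h

lemma cond_pair' (H : phi k g x t + phi k g y t' = phi k g x s + phi k g y s')
    {a b : Fin k} (hne : a ≠ b) :
    ∀ z : ZMod (pp k g),
      (if z = t a + t b then sg2 x (a, b) else 0) + (if z = t' a + t' b then sg2 y (a, b) else 0)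
        = (if z = s a + s b then sg2 x (a, b) else 0)
          + (if z = s' a + s' b then sg2 y (a, b) else 0) := by
  intro z
  rcases hne.lt_or_gt with hab | hab
  · have h := DFunLike.congr_fun H (pairP g a b z.val)
    rw [Finsupp.add_apply, Finsupp.add_apply, phi_apply_pair _ _ _ _ hab,
      phi_apply_pair _ _ _ _ hab, phi_apply_pair _ _ _ _ hab, phi_apply_pair _ _ _ _ hab] at h
    simpa only [(ZMod.val_injective (pp k g)).eq_iff] using h
  · have h := DFunLike.congr_fun H (pairP g b a z.val)
    rw [Finsupp.add_apply, Finsupp.add_apply, phi_apply_pair _ _ _ _ hab,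
      phi_apply_pair _ _ _ _ hab, phi_apply_pair _ _ _ _ hab, phi_apply_pair _ _ _ _ hab] at h
    simp only [(ZMod.val_injective (pp k g)).eq_iff] at h
    rw [sg2_comm x a b, sg2_comm y a b]
    simpa only [add_comm (t b) (t a), add_comm (t' b) (t' a), add_comm (s b) (s a),
      add_comm (s' b) (s' a)] using h

lemma M3S_aux {a₀ : Fin k} (ha₀ : t a₀ ≠ t' a₀)
    (e1 : s a₀ = t a₀) (e2 : s' a₀ = t' a₀)
    (hS1 : ∀ a, (s a = t a ∧ s' a = t' a) ∨ (s a = t' a ∧ s' a = t a))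
    (hS3 : ∀ a b, a ≠ b → (s a + s b = t a + t b ∧ s' a + s' b = t' a + t' b)
      ∨ (s a + s b = t' a + t' b ∧ s' a + s' b = t a + t b)) :
    s = t ∧ s' = t' := by
  have key : ∀ b, s b = t b ∧ s' b = t' b := by
    intro b
    by_cases hb : t b = t' b
    · rcases hS1 b with he | ⟨f1, f2⟩
      · exact he
      · exact ⟨f1.trans hb.symm, f2.trans hb⟩
    · rcases hS1 b with he | ⟨f1, f2⟩
      · exact he
      · exfalso
        have hab : a₀ ≠ b := by rintro rfl; exact ha₀ (e1.symm.trans f1)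
        rcases hS3 a₀ b hab with ⟨g1, _⟩ | ⟨g1, _⟩
        · rw [e1, f1] at g1
          exact hb (add_left_cancel g1).symm
        · rw [e1, f1] at g1
          exact ha₀ (add_right_cancel g1)
  exact ⟨funext fun b => (key b).1, funext fun b => (key b).2⟩

lemma M3S
    (hS1 : ∀ a, (s a = t a ∧ s' a = t' a) ∨ (s a = t' a ∧ s' a = t a))
    (hS3 : ∀ a b, a ≠ b → (s a + s b = t a + t b ∧ s' a + s' b = t' a + t' b)
      ∨ (s a + s b = t' a + t' b ∧ s' a + s' b = t a + t b)) :
    (s = t ∧ s' = t') ∨ (s = t' ∧ s' = t) := by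
  by_cases htt : t = t'
  · subst htt
    left
    constructor <;> funext b
    · rcases hS1 b with ⟨f1, _⟩ | ⟨f1, _⟩ <;> exact f1
    · rcases hS1 b with ⟨_, f2⟩ | ⟨_, f2⟩ <;> exact f2
  · obtain ⟨a₀, ha₀⟩ := Function.ne_iff.mp htt
    rcases hS1 a₀ with ⟨e1, e2⟩ | ⟨e1, e2⟩
    · exact Or.inl (M3S_aux ha₀ e1 e2 hS1 hS3)
    · right
      exact M3S_aux (t := t') (t' := t) (Ne.symm ha₀) e1 e2
        (fun a => (hS1 a).symm) (fun a b hab => (hS3 a b hab).symm)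

lemma M3 (hxy : x ≠ y)
    (h1 : ∀ a, a ≠ x → a ≠ y → (s a = t a ∧ s' a = t' a) ∨ (s a = t' a ∧ s' a = t a))
    (h2x : (t x = t' x ∧ s x = s' x) ∨ (s x = t x ∧ s' x = t' x))
    (h2y : (t y = t' y ∧ s y = s' y) ∨ (s y = t y ∧ s' y = t' y))
    (h3xy : (s x + s y = t x + t y ∧ s' x + s' y = t' x + t' y)
      ∨ (s x + s y = t' x + t' y ∧ s' x + s' y = t x + t y))
    (h4 : ∀ a, a ≠ x → a ≠ y →
      ((t x + t a = t' x + t' a ∧ s x + s a = s' x + s' a)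
        ∨ (s x + s a = t x + t a ∧ s' x + s' a = t' x + t' a))) :
    (s = t ∧ s' = t')
    ∨ (∃ c : ZMod (pp k g), c ≠ 0 ∧ t' = t ∧ s' = s
        ∧ s = fun a => t a + c * chiz g x y a) := by
  have hzx : s x - t x = s' x - t' x := by
    rcases h2x with ⟨e1, e2⟩ | ⟨e1, e2⟩
    · rw [e1, e2]
    · rw [e1, e2, sub_self, sub_self]
  have hzy : s y - t y = s' y - t' y := by
    rcases h2y with ⟨e1, e2⟩ | ⟨e1, e2⟩
    · rw [e1, e2]
    · rw [e1, e2, sub_self, sub_self]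
  have hz : ∀ a, s a - t a = s' a - t' a := by
    intro a
    by_cases hax : a = x
    · subst hax; exact hzx
    by_cases hay : a = y
    · subst hay; exact hzy
    rcases h4 a hax hay with ⟨e1, e2⟩ | ⟨e1, e2⟩
    · linear_combination e2 - e1 - hzx
    · linear_combination e1 - e2 - hzx
  have hout : ∀ a, a ≠ x → a ≠ y → s a = t a ∧ s' a = t' a := by
    intro a hax hay
    rcases h1 a hax hay with he | ⟨e1, e2⟩
    · exact he
    · have h2 : 2 * (t' a - t a) = 0 := by linear_combination hz a - e1 + e2
      have h3 : t' a = t a := sub_eq_zero.mp (half_cancel h2)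
      exact ⟨e1.trans h3, e2.trans h3.symm⟩
  have hxysum : s x + s y = t x + t y ∧ s' x + s' y = t' x + t' y := by
    rcases h3xy with he | ⟨e1, e2⟩
    · exact he
    · have h2 : 2 * ((t' x + t' y) - (t x + t y)) = 0 := by
        linear_combination hzx + hzy - e1 + e2
      have h3 : t' x + t' y = t x + t y := sub_eq_zero.mp (half_cancel h2)
      exact ⟨e1.trans h3, e2.trans h3.symm⟩
  set c := s x - t x with hc_def
  have hcy : s y - t y = -c := by rw [hc_def]; linear_combination hxysum.1
  by_cases hc : c = 0
  · left
    have hsx : s x = t x := sub_eq_zero.mp hc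
    have hsy : s y = t y := sub_eq_zero.mp (by rw [hcy, hc, neg_zero])
    have hs'x : s' x = t' x := sub_eq_zero.mp (by rw [← hzx]; exact hc)
    have hs'y : s' y = t' y := sub_eq_zero.mp (by rw [← hzy, hcy, hc, neg_zero])
    constructor
    · funext a
      by_cases hax : a = x
      · subst hax; exact hsx
      by_cases hay : a = y
      · subst hay; exact hsy
      exact (hout a hax hay).1
    · funext a
      by_cases hax : a = x
      · subst hax; exact hs'x
      by_cases hay : a = y
      · subst hay; exact hs'y
      exact (hout a hax hay).2
  · right
    have htx : t x = t' x := by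
      rcases h2x with ⟨e1, _⟩ | ⟨e1, _⟩
      · exact e1
      · exact absurd (by rw [hc_def, e1, sub_self] : c = 0) hc
    have hty : t y = t' y := by
      rcases h2y with ⟨e1, _⟩ | ⟨e1, _⟩
      · exact e1
      · exfalso
        apply hc
        have h0 : -c = 0 := by rw [← hcy, e1, sub_self]
        exact neg_eq_zero.mp h0
    have htout : ∀ a, a ≠ x → a ≠ y → t a = t' a := by
      intro a hax hay
      rcases h4 a hax hay with ⟨e1, _⟩ | ⟨e1, _⟩
      · linear_combination e1 - htx
      · exfalso
        apply hc
        have h5 := (hout a hax hay).1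
        rw [hc_def]; linear_combination e1 - h5
    have ht : t' = t := by
      funext a
      by_cases hax : a = x
      · subst hax; exact htx.symm
      by_cases hay : a = y
      · subst hay; exact hty.symm
      exact (htout a hax hay).symm
    have hs' : s' = s := by
      funext a
      have h5 := hz a
      have h6 : t' a = t a := by rw [ht]
      linear_combination -h5 + h6
    refine ⟨c, hc, ht, hs', ?_⟩
    funext a
    unfold chiz
    by_cases hax : a = x
    · subst hax; rw [if_pos rfl, mul_one, hc_def]; ring
    by_cases hay : a = y
    · subst hay; rw [if_neg hax, if_pos rfl]
      linear_combination hcy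
    · rw [if_neg hax, if_neg hay, mul_zero, add_zero]
      exact (hout a hax hay).1

lemma matched_same_block
    (H : phi k g x t + phi k g y t' = phi k g x s + phi k g y s') :
    ((s = t ∧ s' = t') ∨ (x = y ∧ s = t' ∧ s' = t))
    ∨ (x ≠ y ∧ ∃ c, c ≠ 0 ∧ t' = t ∧ s' = s ∧ s = fun a => t a + c * chiz g x y a) := by
  by_cases hxy : x = y
  · subst hxy
    have hS1 : ∀ a, (s a = t a ∧ s' a = t' a) ∨ (s a = t' a ∧ s' a = t a) := by
      intro a
      apply ind_pp
      intro z
      have h := cond_single' H a z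
      by_cases hxa : x = a
      · simpa [sg1, hxa] using h
      · simp only [sg1, if_neg hxa] at h
        split_ifs at h ⊢ <;> linarith
    have hS3 : ∀ a b, a ≠ b → (s a + s b = t a + t b ∧ s' a + s' b = t' a + t' b)
        ∨ (s a + s b = t' a + t' b ∧ s' a + s' b = t a + t b) := by
      intro a b hab
      apply ind_pp
      intro z
      have h := cond_pair' H hab z
      by_cases hm : x = a ∨ x = b
      · simpa [sg2, hm] using h
      · simp only [sg2, if_neg hm] at h
        split_ifs at h ⊢ <;> linarith
    rcases M3S hS1 hS3 with he | he
    · exact Or.inl (Or.inl he)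
    · exact Or.inl (Or.inr ⟨rfl, he.1, he.2⟩)
  · have h1 : ∀ a, a ≠ x → a ≠ y → (s a = t a ∧ s' a = t' a) ∨ (s a = t' a ∧ s' a = t a) := by
      intro a hax hay
      apply ind_pp
      intro z
      have h := cond_single' H a z
      simp only [sg1, if_neg (fun hh : x = a => hax hh.symm),
        if_neg (fun hh : y = a => hay hh.symm)] at h
      split_ifs at h ⊢ <;> linarith
    have h2x : (t x = t' x ∧ s x = s' x) ∨ (s x = t x ∧ s' x = t' x) := by
      apply ind_pm
      intro z
      have h := cond_single' H x z
      simp only [sg1, if_pos rfl, if_neg (fun hh : y = x => hxy hh.symm)] at h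
      split_ifs at h ⊢ <;> linarith
    have h2y : (t y = t' y ∧ s y = s' y) ∨ (s y = t y ∧ s' y = t' y) := by
      have hind := ind_pm (t := t' y) (t' := t y) (s := s' y) (s' := s y) ?_
      · rcases hind with ⟨e1, e2⟩ | ⟨e1, e2⟩
        · exact Or.inl ⟨e1.symm, e2.symm⟩
        · exact Or.inr ⟨e2, e1⟩
      · intro z
        have h := cond_single' H y z
        simp only [sg1, if_pos rfl, if_neg hxy] at h
        split_ifs at h ⊢ <;> linarith
    have h3xy : (s x + s y = t x + t y ∧ s' x + s' y = t' x + t' y)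
        ∨ (s x + s y = t' x + t' y ∧ s' x + s' y = t x + t y) := by
      apply ind_pp
      intro z
      have h := cond_pair' H hxy z
      have e1 : sg2 x (x, y) = 1 := by simp [sg2]
      have e2 : sg2 y (x, y) = 1 := by simp [sg2]
      rw [e1, e2] at h
      exact h
    have h4 : ∀ a, a ≠ x → a ≠ y →
        ((t x + t a = t' x + t' a ∧ s x + s a = s' x + s' a)
          ∨ (s x + s a = t x + t a ∧ s' x + s' a = t' x + t' a)) := by
      intro a hax hay
      apply ind_pm
      intro z
      have h := cond_pair' H (show x ≠ a from fun hh => hax hh.symm) z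
      have e1 : sg2 x (x, a) = 1 := by simp [sg2]
      have e2 : sg2 y (x, a) = -1 := by
        unfold sg2
        rw [if_neg]
        rintro (hh | hh)
        · exact hxy hh.symm
        · exact hay hh.symm
      rw [e1, e2] at h
      split_ifs at h ⊢ <;> linarith
    rcases M3 hxy h1 h2x h2y h3xy h4 with he | ⟨c, hc, hrest⟩
    · exact Or.inl (Or.inl he)
    · exact Or.inr ⟨hxy, c, hc, hrest⟩

end Matched

lemma tags_match {k g₁ g₂ g₃ g₄ : ℕ} {i₁ i₂ i₃ i₄ : Fin k}
    {t₁ : Fin k → ZMod (pp k g₁)} {t₂ : Fin k → ZMod (pp k g₂)}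
    {t₃ : Fin k → ZMod (pp k g₃)} {t₄ : Fin k → ZMod (pp k g₄)}
    (H : phi k g₁ i₁ t₁ + phi k g₂ i₂ t₂ = phi k g₃ i₃ t₃ + phi k g₄ i₄ t₄) :
    (((g₃ : ℕ), i₃) = ((g₁ : ℕ), i₁) ∧ ((g₄ : ℕ), i₄) = ((g₂ : ℕ), i₂))
    ∨ (((g₃ : ℕ), i₃) = ((g₂ : ℕ), i₂) ∧ ((g₄ : ℕ), i₄) = ((g₁ : ℕ), i₁)) := by
  apply ind_pp
  rintro ⟨zg, zi⟩
  have h := DFunLike.congr_fun H (tagP zg zi)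
  rw [Finsupp.add_apply, Finsupp.add_apply, phi_apply_tag, phi_apply_tag,
    phi_apply_tag, phi_apply_tag] at h
  simpa only [Prod.mk.injEq] using h

/-- The swap configuration in terms of `w`-values. -/
def SwapCfg (k : ℕ) (A B C D : ℤ) : Prop :=
  ∃ (g : ℕ) (x y : Fin k) (τ : Fin k → ZMod (pp k g)) (c : ZMod (pp k g)), x ≠ y ∧ c ≠ 0 ∧
    A = w k g x τ ∧ B = w k g y τ ∧
    C = w k g x (fun a => τ a + c * chiz g x y a) ∧
    D = w k g y (fun a => τ a + c * chiz g x y a)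

lemma CL_matched {k g₁ g₂ : ℕ} {i₁ i₂ : Fin k} {t₁ s₁ : Fin k → ZMod (pp k g₁)}
    {t₂ s₂ : Fin k → ZMod (pp k g₂)}
    (Hphi : phi k g₁ i₁ t₁ + phi k g₂ i₂ t₂ = phi k g₁ i₁ s₁ + phi k g₂ i₂ s₂) :
    ((w k g₁ i₁ s₁ = w k g₁ i₁ t₁ ∧ w k g₂ i₂ s₂ = w k g₂ i₂ t₂)
      ∨ (w k g₁ i₁ s₁ = w k g₂ i₂ t₂ ∧ w k g₂ i₂ s₂ = w k g₁ i₁ t₁))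
    ∨ SwapCfg k (w k g₁ i₁ t₁) (w k g₂ i₂ t₂) (w k g₁ i₁ s₁) (w k g₂ i₂ s₂) := by
  by_cases hgg : g₁ = g₂
  · subst hgg
    rcases matched_same_block Hphi with (⟨e1, e2⟩ | ⟨hieq, e1, e2⟩) | ⟨hine, c, hc, e1, e2, e3⟩
    · exact Or.inl (Or.inl ⟨by rw [e1], by rw [e2]⟩)
    · exact Or.inl (Or.inr ⟨by rw [e1, hieq], by rw [e2, ← hieq]⟩)
    · refine Or.inr ⟨_, _, _, _, c, hine, hc, rfl, ?_, ?_, ?_⟩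
      · rw [e1]
      · rw [e3]
      · rw [e2, e3]
  · have hst : s₁ = t₁ := by
      funext a
      have h2 := DFunLike.congr_fun Hphi (sinP g₁ a ((t₁ a).val))
      rw [Finsupp.add_apply, Finsupp.add_apply, phi_apply_single,
        phi_apply_single_ne _ _ _ _ hgg,
        phi_apply_single, phi_apply_single_ne _ _ _ _ hgg] at h2
      rw [if_pos rfl] at h2
      by_cases hcc : (t₁ a).val = (s₁ a).val
      · exact (ZMod.val_injective _ hcc).symm
      · rw [if_neg hcc] at h2
        have := sg1_ne_zero i₁ a
        omega
    have Hw : w k g₁ i₁ t₁ + w k g₂ i₂ t₂ = w k g₁ i₁ t₁ + w k g₂ i₂ s₂ := by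
      unfold w; rw [← val_add, ← val_add, Hphi, hst]
    have h24 : w k g₂ i₂ s₂ = w k g₂ i₂ t₂ := by omega
    exact Or.inl (Or.inl ⟨by rw [hst], h24⟩)

/-- Master classification of coincidences of pair-sums of elements. -/
lemma CL {k g₁ g₂ g₃ g₄ : ℕ} {i₁ i₂ i₃ i₄ : Fin k}
    {t₁ : Fin k → ZMod (pp k g₁)} {t₂ : Fin k → ZMod (pp k g₂)}
    {t₃ : Fin k → ZMod (pp k g₃)} {t₄ : Fin k → ZMod (pp k g₄)}
    (H : w k g₁ i₁ t₁ + w k g₂ i₂ t₂ = w k g₃ i₃ t₃ + w k g₄ i₄ t₄) :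
    ((w k g₃ i₃ t₃ = w k g₁ i₁ t₁ ∧ w k g₄ i₄ t₄ = w k g₂ i₂ t₂)
      ∨ (w k g₃ i₃ t₃ = w k g₂ i₂ t₂ ∧ w k g₄ i₄ t₄ = w k g₁ i₁ t₁))
    ∨ SwapCfg k (w k g₁ i₁ t₁) (w k g₂ i₂ t₂) (w k g₃ i₃ t₃) (w k g₄ i₄ t₄)
    ∨ SwapCfg k (w k g₁ i₁ t₁) (w k g₂ i₂ t₂) (w k g₄ i₄ t₄) (w k g₃ i₃ t₃) := by
  have Hphi := phi_eq_of_sum_eq H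
  rcases tags_match Hphi with ⟨hA, hB⟩ | ⟨hA, hB⟩
  · have hg3 : g₃ = g₁ := congrArg Prod.fst hA
    subst hg3
    have hi3 : i₃ = i₁ := by simpa [Prod.ext_iff] using hA
    subst hi3
    have hg4 : g₄ = g₂ := congrArg Prod.fst hB
    subst hg4
    have hi4 : i₄ = i₂ := by simpa [Prod.ext_iff] using hB
    subst hi4
    rcases CL_matched Hphi with he | he
    · exact Or.inl he
    · exact Or.inr (Or.inl he)
  · have hg3 : g₃ = g₂ := congrArg Prod.fst hA
    subst hg3
    have hi3 : i₃ = i₂ := by simpa [Prod.ext_iff] using hA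
    subst hi3
    have hg4 : g₄ = g₁ := congrArg Prod.fst hB
    subst hg4
    have hi4 : i₄ = i₁ := by simpa [Prod.ext_iff] using hB
    subst hi4
    rw [add_comm (phi _ _ _ t₃) (phi _ _ _ t₄)] at Hphi
    rcases CL_matched Hphi with (⟨e1, e2⟩ | ⟨e1, e2⟩) | he
    · exact Or.inl (Or.inr ⟨e2, e1⟩)
    · exact Or.inl (Or.inl ⟨e2, e1⟩)
    · exact Or.inr (Or.inr he)

lemma label_inv {k g : ℕ} {x y : Fin k} (hxy : x ≠ y) (τ : Fin k → ZMod (pp k g))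
    (c : ZMod (pp k g)) :
    w k g x (fun a => τ a + c * chiz g x y a) + w k g y (fun a => τ a + c * chiz g x y a)
      = w k g x τ + w k g y τ := by
  set u : Fin k → ZMod (pp k g) := fun a => τ a + c * chiz g x y a with hu
  have huout : ∀ a, a ≠ x → a ≠ y → u a = τ a := by
    intro a hax hay
    rw [hu]; simp only; unfold chiz
    rw [if_neg hax, if_neg hay, mul_zero, add_zero]
  have huxy : u x + u y = τ x + τ y := by
    rw [hu]; simp only; unfold chiz
    rw [if_pos rfl, if_neg (Ne.symm hxy), if_pos rfl]
    ring
  have hphi : phi k g x u + phi k g y u = phi k g x τ + phi k g y τ := by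
    ext pos
    rw [Finsupp.add_apply, Finsupp.add_apply]
    obtain ⟨g', q⟩ := pos
    rcases q with j | q
    · rw [show ((g', Sum.inl j) : Pos k) = tagP g' j from rfl]
      rw [phi_apply_tag, phi_apply_tag, phi_apply_tag, phi_apply_tag]
    · rcases q with ⟨a, z⟩ | ⟨a, b, z⟩
      · rw [show ((g', Sum.inr (Sum.inl (a, z))) : Pos k) = sinP g' a z from rfl]
        by_cases hgg : g' = g
        · subst hgg
          rw [phi_apply_single, phi_apply_single, phi_apply_single, phi_apply_single]
          by_cases hax : a = x
          · have e1 : sg1 x a = 1 := by unfold sg1; rw [if_pos hax.symm]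
            have e2 : sg1 y a = -1 := by
              unfold sg1; rw [if_neg (fun h : y = a => hxy ((h.trans hax).symm))]
            rw [e1, e2]
            split_ifs <;> norm_num
          by_cases hay : a = y
          · have e1 : sg1 x a = -1 := by
              unfold sg1; rw [if_neg (fun h : x = a => hxy (h.trans hay))]
            have e2 : sg1 y a = 1 := by unfold sg1; rw [if_pos hay.symm]
            rw [e1, e2]
            split_ifs <;> norm_num
          · rw [huout a hax hay]
        · rw [phi_apply_single_ne _ _ _ _ hgg, phi_apply_single_ne _ _ _ _ hgg,
            phi_apply_single_ne _ _ _ _ hgg, phi_apply_single_ne _ _ _ _ hgg]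
      · rw [show ((g', Sum.inr (Sum.inr (a, b, z))) : Pos k) = pairP g' a b z from rfl]
        by_cases hgg : g' = g
        · subst hgg
          by_cases hab : a < b
          · rw [phi_apply_pair _ _ _ _ hab, phi_apply_pair _ _ _ _ hab,
              phi_apply_pair _ _ _ _ hab, phi_apply_pair _ _ _ _ hab]
            by_cases hmx : x = a ∨ x = b
            · by_cases hmy : y = a ∨ y = b
              · -- {a,b} = {x,y} : sums invariant
                have hsum : u a + u b = τ a + τ b := by
                  rcases hmx with h1 | h1 <;> rcases hmy with h2 | h2
                  · exact absurd (h1.trans h2.symm) hxy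
                  · rw [← h1, ← h2]; exact huxy
                  · rw [← h1, ← h2, add_comm (u y) (u x), add_comm (τ y) (τ x)]; exact huxy
                  · exact absurd (h1.trans h2.symm) hxy
                rw [hsum]
              · have e1 : sg2 x (a, b) = 1 := by unfold sg2; rw [if_pos hmx]
                have e2 : sg2 y (a, b) = -1 := by unfold sg2; rw [if_neg hmy]
                rw [e1, e2]
                split_ifs <;> norm_num
            · by_cases hmy : y = a ∨ y = b
              · have e1 : sg2 x (a, b) = -1 := by unfold sg2; rw [if_neg hmx]
                have e2 : sg2 y (a, b) = 1 := by unfold sg2; rw [if_pos hmy]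
                rw [e1, e2]
                split_ifs <;> norm_num
              · have hsum : u a + u b = τ a + τ b := by
                  rw [huout a (fun h => hmx (Or.inl h.symm)) (fun h => hmy (Or.inl h.symm)),
                    huout b (fun h => hmx (Or.inr h.symm)) (fun h => hmy (Or.inr h.symm))]
                rw [hsum]
          · rw [phi_apply_pair_bad _ _ _ _ hab, phi_apply_pair_bad _ _ _ _ hab,
              phi_apply_pair_bad _ _ _ _ hab, phi_apply_pair_bad _ _ _ _ hab]
        · rw [phi_apply_pair_ne _ _ _ _ hgg, phi_apply_pair_ne _ _ _ _ hgg,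
            phi_apply_pair_ne _ _ _ _ hgg, phi_apply_pair_ne _ _ _ _ hgg]
  unfold w
  rw [← val_add, ← val_add, hphi]

@[simp] lemma chiz_at_x {k g : ℕ} (x y : Fin k) : chiz g x y x = 1 := by
  unfold chiz; rw [if_pos rfl]

lemma chiz_at_y {k g : ℕ} {x y : Fin k} (hxy : x ≠ y) : chiz g x y y = -1 := by
  unfold chiz; rw [if_neg (Ne.symm hxy), if_pos rfl]

lemma chiz_at_out {k g : ℕ} {x y a : Fin k} (hax : a ≠ x) (hay : a ≠ y) :
    chiz g x y a = 0 := by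
  unfold chiz; rw [if_neg hax, if_neg hay]

/-- The set `W`. -/
def Wset (k : ℕ) : Set ℤ :=
  {n | ∃ (g : ℕ) (i : Fin k) (t : Fin k → ZMod (pp k g)), n = w k g i t}

/-- The Sidon pieces. -/
def Tset (k : ℕ) (i : Fin k) : Set ℤ :=
  {n | ∃ (g : ℕ) (t : Fin k → ZMod (pp k g)), n = w k g i t}

lemma W_eq_union (k : ℕ) : Wset k = ⋃ i, Tset k i := by
  ext n
  simp only [Wset, Tset, Set.mem_setOf_eq, Set.mem_iUnion]
  constructor
  · rintro ⟨g, i, t, rfl⟩; exact ⟨i, g, t, rfl⟩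
  · rintro ⟨i, g, t, rfl⟩; exact ⟨g, i, t, rfl⟩

lemma encard_le_two_of_three {α : Type*} {S : Set α}
    (h : ∀ r₁ r₂ r₃, r₁ ∈ S → r₂ ∈ S → r₃ ∈ S → r₁ = r₂ ∨ r₁ = r₃ ∨ r₂ = r₃) :
    S.encard ≤ 2 := by
  by_cases h0 : S = ∅
  · simp [h0]
  obtain ⟨r, hr⟩ := Set.nonempty_iff_ne_empty.mpr h0
  by_cases h1 : ∀ r' ∈ S, r' = r
  · have hsub : S ⊆ {r} := fun a ha => h1 a ha
    calc S.encard ≤ ({r} : Set α).encard := Set.encard_mono hsub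
    _ ≤ 2 := by rw [Set.encard_singleton]; norm_num
  · push_neg at h1
    obtain ⟨r', hr', hne⟩ := h1
    have hsub : S ⊆ {r, r'} := by
      intro a ha
      rcases h a r r' ha hr hr' with h' | h' | h'
      · exact Or.inl h'
      · exact Or.inr h'
      · exact absurd h'.symm hne
    calc S.encard ≤ ({r, r'} : Set α).encard := Set.encard_mono hsub
    _ ≤ ({r'} : Set α).encard + 1 := Set.encard_insert_le _ _
    _ ≤ 2 := by rw [Set.encard_singleton]; norm_num

lemma swap_struct {k : ℕ} {ξ : ℤ} (hξ : ξ ≠ 0) {g₁ g₂ g₃ g₄ : ℕ} {i₁ i₂ i₃ i₄ : Fin k}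
    {t₁ : Fin k → ZMod (pp k g₁)} {t₂ : Fin k → ZMod (pp k g₂)}
    {t₃ : Fin k → ZMod (pp k g₃)} {t₄ : Fin k → ZMod (pp k g₄)}
    (h1 : w k g₁ i₁ t₁ - w k g₂ i₂ t₂ = ξ) (h2 : w k g₃ i₃ t₃ - w k g₄ i₄ t₄ = ξ)
    (hne : ¬(w k g₃ i₃ t₃ = w k g₁ i₁ t₁ ∧ w k g₄ i₄ t₄ = w k g₂ i₂ t₂)) :
    SwapCfg k (w k g₁ i₁ t₁) (w k g₄ i₄ t₄) (w k g₃ i₃ t₃) (w k g₂ i₂ t₂)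
    ∨ SwapCfg k (w k g₁ i₁ t₁) (w k g₄ i₄ t₄) (w k g₂ i₂ t₂) (w k g₃ i₃ t₃) := by
  have H : w k g₁ i₁ t₁ + w k g₄ i₄ t₄ = w k g₃ i₃ t₃ + w k g₂ i₂ t₂ := by omega
  rcases CL H with (⟨e1, e2⟩ | ⟨e1, e2⟩) | he | he
  · exact absurd ⟨e1, e2.symm⟩ hne
  · exfalso; apply hξ; omega
  · exact Or.inl he
  · exact Or.inr he

lemma rep_triple {k : ℕ} {ξ : ℤ} (hξ : ξ ≠ 0) :
    ∀ r₁ r₂ r₃ : ℤ × ℤ,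
      r₁ ∈ {p : ℤ × ℤ | p.1 ∈ Wset k ∧ p.2 ∈ Wset k ∧ p.1 - p.2 = ξ} →
      r₂ ∈ {p : ℤ × ℤ | p.1 ∈ Wset k ∧ p.2 ∈ Wset k ∧ p.1 - p.2 = ξ} →
      r₃ ∈ {p : ℤ × ℤ | p.1 ∈ Wset k ∧ p.2 ∈ Wset k ∧ p.1 - p.2 = ξ} →
      r₁ = r₂ ∨ r₁ = r₃ ∨ r₂ = r₃ := by
  rintro ⟨A₁, B₁⟩ ⟨A₂, B₂⟩ ⟨A₃, B₃⟩ ⟨hA₁, hB₁, hd₁⟩ ⟨hA₂, hB₂, hd₂⟩ ⟨hA₃, hB₃, hd₃⟩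
  simp only at hd₁ hd₂ hd₃
  by_cases h12 : (A₁, B₁) = (A₂, B₂)
  · exact Or.inl h12
  by_cases h13 : (A₁, B₁) = (A₃, B₃)
  · exact Or.inr (Or.inl h13)
  right; right
  obtain ⟨a₁, u₁, v₁, rfl⟩ := hA₁
  obtain ⟨b₁, p₁, q₁, rfl⟩ := hB₁
  obtain ⟨a₂, u₂, v₂, rfl⟩ := hA₂
  obtain ⟨b₂, p₂, q₂, rfl⟩ := hB₂
  obtain ⟨a₃, u₃, v₃, rfl⟩ := hA₃
  obtain ⟨b₃, p₃, q₃, rfl⟩ := hB₃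
  have hne₂ : ¬(w k a₂ u₂ v₂ = w k a₁ u₁ v₁ ∧ w k b₂ p₂ q₂ = w k b₁ p₁ q₁) := by
    rintro ⟨e1, e2⟩; exact h12 (by rw [Prod.mk.injEq]; exact ⟨e1.symm, e2.symm⟩)
  have hne₃ : ¬(w k a₃ u₃ v₃ = w k a₁ u₁ v₁ ∧ w k b₃ p₃ q₃ = w k b₁ p₁ q₁) := by
    rintro ⟨e1, e2⟩; exact h13 (by rw [Prod.mk.injEq]; exact ⟨e1.symm, e2.symm⟩)
  have S₂ := swap_struct hξ hd₁ hd₂ hne₂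
  have S₃ := swap_struct hξ hd₁ hd₃ hne₃
  rw [Prod.mk.injEq]
  rcases S₂ with ⟨g, x, y, τ, c, hxy, hc, eA1, eB2, eA2, eB1⟩ |
      ⟨g, x, y, τ, c, hxy, hc, eA1, eB2, eB1, eA2⟩ <;>
    rcases S₃ with ⟨g', x', y', τ', c', hxy', hc', fA1, fB3, fA3, fB1⟩ |
      ⟨g', x', y', τ', c', hxy', hc', fA1, fB3, fB1, fA3⟩
  · -- var1, var1
    obtain ⟨hgg, hxx⟩ := w_inj_idx (eA1.symm.trans fA1)
    subst hgg; subst hxx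
    have hττ : τ = τ' := w_inj_t (eA1.symm.trans fA1)
    subst hττ
    obtain ⟨-, hyy⟩ := w_inj_idx (eB1.symm.trans fB1)
    subst hyy
    have hplus : (fun a => τ a + c * chiz g x y a) = (fun a => τ a + c' * chiz g x y a) :=
      w_inj_t (eB1.symm.trans fB1)
    have hcc : c = c' := by
      have := congrFun hplus x
      simp only [chiz_at_x, mul_one] at this
      exact add_left_cancel this
    subst hcc
    exact ⟨eA2.trans fA3.symm, eB2.trans fB3.symm⟩
  · -- var1, var2
    obtain ⟨hgg, hxx⟩ := w_inj_idx (eA1.symm.trans fA1)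
    subst hgg; subst hxx
    obtain ⟨-, hyy⟩ := w_inj_idx (eB1.symm.trans fB1)
    exact absurd hyy.symm hxy
  · -- var2, var1
    obtain ⟨hgg, hxx⟩ := w_inj_idx (eA1.symm.trans fA1)
    subst hgg; subst hxx
    obtain ⟨-, hyy⟩ := w_inj_idx (eB1.symm.trans fB1)
    exact absurd hyy hxy'
  · -- var2, var2
    obtain ⟨hgg, hxx⟩ := w_inj_idx (eA1.symm.trans fA1)
    subst hgg; subst hxx
    have hττ : τ = τ' := w_inj_t (eA1.symm.trans fA1)
    subst hττ
    obtain ⟨-, -⟩ := w_inj_idx (eB1.symm.trans fB1)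
    have hplus : (fun a => τ a + c * chiz g x y a) = (fun a => τ a + c' * chiz g x y' a) :=
      w_inj_t (eB1.symm.trans fB1)
    by_cases hyy : y' = y
    · rw [hyy] at hplus fA3 fB3
      have hcc : c = c' := by
        have h0 := congrFun hplus y
        rw [chiz_at_y hxy, mul_neg_one, mul_neg_one] at h0
        exact neg_inj.mp (add_left_cancel h0)
      constructor
      · rw [eA2, fA3, ← hcc]
      · rw [eB2, fB3]
    · exfalso
      have h0 := congrFun hplus y
      rw [chiz_at_y hxy, chiz_at_out (Ne.symm hxy) (fun h => hyy h.symm), mul_zero,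
        mul_neg_one, add_zero] at h0
      apply hc
      have h2 : -c = 0 := by
        have := add_left_cancel (a := τ y) (by rw [h0]; ring : τ y + -c = τ y + 0)
        exact this
      exact neg_eq_zero.mp h2

lemma isB2Circ_W (k : ℕ) : IsB2Circ 2 (Wset k) := by
  intro ξ hξ
  exact le_trans (encard_le_two_of_three (rep_triple hξ)) (by norm_num)

lemma isB2_T (k : ℕ) (i : Fin k) : IsB2 1 (Tset k i) := by
  intro ξ
  rw [show ((1:ℕ) : ℕ∞) = 1 by norm_num]
  rw [Set.encard_le_one_iff]
  rintro p q ⟨A₁, hA₁, B₁, hB₁, rfl, hs₁⟩ ⟨A₂, hA₂, B₂, hB₂, rfl, hs₂⟩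
  obtain ⟨g₁, t₁, rfl⟩ := hA₁
  obtain ⟨g₂, t₂, rfl⟩ := hB₁
  obtain ⟨g₃, t₃, rfl⟩ := hA₂
  obtain ⟨g₄, t₄, rfl⟩ := hB₂
  have H : w k g₁ i t₁ + w k g₂ i t₂ = w k g₃ i t₃ + w k g₄ i t₄ := by omega
  rcases CL H with (⟨e1, e2⟩ | ⟨e1, e2⟩) | he | he
  · rw [e1, e2]
  · rw [e1, e2]; exact Sym2.eq_swap.symm
  · exfalso
    obtain ⟨g, x, y, τ, c, hxy, hc, eA, eB, -, -⟩ := he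
    obtain ⟨-, h1⟩ := w_inj_idx eA
    obtain ⟨-, h2⟩ := w_inj_idx eB
    exact hxy (h1.symm.trans h2)
  · exfalso
    obtain ⟨g, x, y, τ, c, hxy, hc, eA, eB, -, -⟩ := he
    obtain ⟨-, h1⟩ := w_inj_idx eA
    obtain ⟨-, h2⟩ := w_inj_idx eB
    exact hxy (h1.symm.trans h2)

lemma card_arith {k g : ℕ} (hk : 2 ≤ k) : (k-1)*k*k*g < pp k g := by
  have h2 := pp_ge k g
  have h3 : (k-1)*k*k ≤ (k+1)^4 := by
    have e1 : (k-1)*k*k ≤ (k+1)*(k+1)*(k+1) := by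
      have l1 : k - 1 ≤ k+1 := by omega
      have l2 : k ≤ k + 1 := by omega
      exact Nat.mul_le_mul (Nat.mul_le_mul l1 l2) l2
    have e2 : (k+1)*(k+1)*(k+1) = (k+1)^3 := by ring
    have e3 : (k+1)^3 ≤ (k+1)^4 := Nat.pow_le_pow_right (by omega) (by omega)
    omega
  have h4 : (k-1)*k*k*g ≤ (k+1)^4*g := Nat.mul_le_mul_right _ h3
  have h5 : (k+1)^4*g < (g+1)*(k+1)^4 + 3 := by
    have hA : 0 < (k+1)^4 := by positivity
    nlinarith
  omega

lemma forcing {k : ℕ} (hk : 2 ≤ k) {g : ℕ} (hg : 0 < g)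
    (T : Fin (k-1) → Set ℤ) (hT : ∀ i, IsB2 g (T i)) (hU : Wset k = ⋃ i, T i) : False := by
  classical
  set p := pp k g with hp
  -- the coloring
  let col : ℤ → Fin (k-1) := fun n => if h : ∃ i', n ∈ T i' then h.choose else ⟨0, by omega⟩
  have hcol : ∀ n ∈ Wset k, n ∈ T (col n) := by
    intro n hn
    have hex : ∃ i', n ∈ T i' := by
      rw [hU] at hn; exact Set.mem_iUnion.mp hn
    show n ∈ T (dite _ _ _)
    rw [dif_pos hex]
    exact hex.choose_spec
  -- monochromatic pair in every gadget
  have hpair : ∀ t : Fin k → ZMod p, ∃ q : Fin k × Fin k,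
      q.1 ≠ q.2 ∧ col (w k g q.1 t) = col (w k g q.2 t) := by
    intro t
    have hcard : Fintype.card (Fin (k-1)) < Fintype.card (Fin k) := by
      simp only [Fintype.card_fin]; omega
    obtain ⟨i', j', hne, he⟩ :=
      Fintype.exists_ne_map_eq_of_card_lt (fun i' => col (w k g i' t)) hcard
    exact ⟨(i', j'), hne, he⟩
  let pat : (Fin k → ZMod p) → Fin k × Fin k := fun t => (hpair t).choose
  have hpat : ∀ t, (pat t).1 ≠ (pat t).2 ∧
      col (w k g (pat t).1 t) = col (w k g (pat t).2 t) := fun t => (hpair t).choose_spec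
  let G1 : (Fin k → ZMod p) → Fin (k-1) × Fin k × Fin k :=
    fun t => (col (w k g (pat t).1 t), pat t)
  -- first pigeonhole
  have hcardα : Fintype.card (Fin k → ZMod p) = p^k := by
    rw [Fintype.card_fun, ZMod.card, Fintype.card_fin]
  have hcardβ : Fintype.card (Fin (k-1) × Fin k × Fin k) = (k-1)*k*k := by
    simp [Fintype.card_prod, Fintype.card_fin, mul_assoc]
  have hple : (k-1)*k*k*g < p := card_arith hk
  have hppos : 0 < p := (pp_prime k g).pos
  have hstep1 : (Finset.univ : Finset (Fin (k-1) × Fin k × Fin k)).card * (g * p^(k-1))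
      < (Finset.univ : Finset (Fin k → ZMod p)).card := by
    rw [Finset.card_univ, Finset.card_univ, hcardα, hcardβ]
    calc (k-1)*k*k * (g * p^(k-1)) = ((k-1)*k*k*g) * p^(k-1) := by ring
    _ < p * p^(k-1) := by
        exact (Nat.mul_lt_mul_right (pow_pos hppos (k-1))).mpr hple
    _ = p^k := by
        rw [← pow_succ']
        congr 1
        omega
  obtain ⟨cls, -, hcard1⟩ := Finset.exists_lt_card_fiber_of_mul_lt_card_of_maps_to
    (fun t _ => Finset.mem_univ (G1 t)) hstep1
  set S1 : Finset (Fin k → ZMod p) := Finset.univ.filter (fun t => G1 t = cls) with hS1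
  set c : Fin (k-1) := cls.1 with hcdef
  set i : Fin k := cls.2.1 with hidef
  set j : Fin k := cls.2.2 with hjdef
  have hS1mem : ∀ t ∈ S1, pat t = (i, j) ∧ col (w k g i t) = c := by
    intro t ht
    rw [hS1, Finset.mem_filter] at ht
    have h1 : pat t = cls.2 := congrArg Prod.snd ht.2
    have h2 : col (w k g (pat t).1 t) = cls.1 := congrArg Prod.fst ht.2
    rw [h1] at h2
    exact ⟨by rw [h1], h2⟩
  have hS1ne : S1.Nonempty := by
    rw [← Finset.card_pos]
    have : 0 < g * p^(k-1) + 1 := by positivity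
    omega
  have hij : i ≠ j := by
    obtain ⟨t₀, ht₀⟩ := hS1ne
    have := (hpat t₀).1
    rw [(hS1mem t₀ ht₀).1] at this
    exact this
  -- second pigeonhole
  let ψ : (Fin k → ZMod p) → (Fin k → ZMod p) := fun t => fun a => t a - (t i) * chiz g i j a
  set Z0 : Finset (Fin k → ZMod p) := Finset.univ.filter (fun f => f i = 0) with hZ0
  have hmapsto : ∀ t ∈ S1, ψ t ∈ Z0 := by
    intro t _
    rw [hZ0, Finset.mem_filter]
    refine ⟨Finset.mem_univ _, ?_⟩
    show t i - (t i) * chiz g i j i = 0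
    rw [chiz_at_x, mul_one, sub_self]
  have hZ0card : Z0.card = p^(k-1) := by
    rw [hZ0, ← Fintype.card_subtype]
    have e : {f : Fin k → ZMod p // f i = 0} ≃ ({a : Fin k // a ≠ i} → ZMod p) :=
      { toFun := fun f a => f.1 a.1
        invFun := fun gg => ⟨fun a => if h : a = i then 0 else gg ⟨a, h⟩, by simp⟩
        left_inv := fun f => by
          apply Subtype.ext
          funext a
          by_cases h : a = i
          · subst h; simp only [dif_pos rfl]; exact f.2.symm
          · simp only [dif_neg h]
        right_inv := fun gg => by
          funext a
          simp only [dif_neg a.2] }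
    rw [Fintype.card_congr e, Fintype.card_fun, ZMod.card]
    congr 1
    rw [Fintype.card_subtype_compl, Fintype.card_subtype_eq, Fintype.card_fin]
  have hstep2 : Z0.card * g < S1.card := by
    rw [hZ0card]
    calc p^(k-1) * g = g * p^(k-1) := by ring
    _ < S1.card := hcard1
  obtain ⟨z0, -, hcard2⟩ := Finset.exists_lt_card_fiber_of_mul_lt_card_of_maps_to hmapsto hstep2
  set S2 : Finset (Fin k → ZMod p) := S1.filter (fun t => ψ t = z0) with hS2
  -- all gadgets in S2 share the label L
  set L : ℤ := w k g i z0 + w k g j z0 with hL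
  have hlabel : ∀ t ∈ S2, w k g i t + w k g j t = L := by
    intro t ht
    rw [hS2, Finset.mem_filter] at ht
    have hψ : ψ t = z0 := ht.2
    have ht' : t = fun a => z0 a + (t i) * chiz g i j a := by
      funext a
      have := congrFun hψ a
      show t a = z0 a + (t i) * chiz g i j a
      rw [← this]
      show t a = (t a - t i * chiz g i j a) + t i * chiz g i j a
      ring
    rw [hL]
    calc w k g i t + w k g j t
        = w k g i (fun a => z0 a + (t i) * chiz g i j a)
          + w k g j (fun a => z0 a + (t i) * chiz g i j a) := by rw [← ht']
    _ = w k g i z0 + w k g j z0 := label_inv hij z0 (t i)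
  -- mono pairs
  have hmono : ∀ t ∈ S2, w k g i t ∈ T c ∧ w k g j t ∈ T c := by
    intro t ht
    have htS1 : t ∈ S1 := by rw [hS2, Finset.mem_filter] at ht; exact ht.1
    obtain ⟨hp1, hp2⟩ := hS1mem t htS1
    have hspec := (hpat t).2
    rw [hp1] at hspec
    have hci : col (w k g i t) = c := hp2
    have hcj : col (w k g j t) = c := by rw [← hspec]; exact hp2
    constructor
    · have := hcol (w k g i t) ⟨g, i, t, rfl⟩
      rwa [hci] at this
    · have := hcol (w k g j t) ⟨g, j, t, rfl⟩
      rwa [hcj] at this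
  -- inject into the representation set
  let msym : (Fin k → ZMod p) → Sym2 ℤ := fun t => s(w k g i t, w k g j t)
  have hinj : Set.InjOn msym S2 := by
    intro t₁ _ t₂ _ he
    show t₁ = t₂
    rcases Sym2.eq_iff.mp he with ⟨e1, -⟩ | ⟨e1, -⟩
    · exact w_inj_t e1
    · exact absurd (w_inj_idx e1).2 hij
  have hsub : (↑(S2.image msym) : Set (Sym2 ℤ))
      ⊆ {q : Sym2 ℤ | ∃ a ∈ T c, ∃ b ∈ T c, q = s(a, b) ∧ a + b = L} := by
    intro q hq
    rw [Finset.coe_image] at hq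
    obtain ⟨t, ht, rfl⟩ := hq
    have ht2 : t ∈ S2 := ht
    exact ⟨w k g i t, (hmono t ht2).1, w k g j t, (hmono t ht2).2, rfl, hlabel t ht2⟩
  have hbig : (g : ℕ∞) < ((S2.image msym).card : ℕ∞) := by
    rw [Finset.card_image_of_injOn hinj]
    exact_mod_cast hcard2
  have hle := Set.encard_mono hsub
  rw [Set.encard_coe_eq_coe_finsetCard] at hle
  have := hT c L
  have hcontra : ((S2.image msym).card : ℕ∞) ≤ (g : ℕ∞) := le_trans hle this
  exact absurd (lt_of_lt_of_le hbig hcontra) (lt_irrefl _)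

end St5


theorem stmt_5 :
    ∀ k : ℕ, 0 < k → ∃ W : Set ℤ,
      IsB2Circ 2 W ∧
      (∃ T : Fin k → Set ℤ, (∀ i, IsB2 1 (T i)) ∧ W = ⋃ i, T i) ∧
      ∀ g : ℕ, 0 < g →
        ¬ ∃ T : Fin (k - 1) → Set ℤ, (∀ i, IsB2 g (T i)) ∧ W = ⋃ i, T i := by
  intro k hk
  refine ⟨St5.Wset k, St5.isB2Circ_W k,
    ⟨St5.Tset k, fun i => St5.isB2_T k i, St5.W_eq_union k⟩, ?_⟩
  rintro g hg ⟨T, hT, hU⟩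
  by_cases hk1 : k = 1
  · subst hk1
    have hempty : (⋃ i : Fin (1-1), T i) = ∅ := by simp
    rw [hempty] at hU
    have hmem : St5.w 1 0 (⟨0, hk⟩ : Fin 1) (fun _ => 0) ∈ St5.Wset 1 :=
      ⟨0, ⟨0, hk⟩, (fun _ => 0), rfl⟩
    rw [hU] at hmem
    exact hmem
  · exact St5.forcing (by omega) hg T hT hU
end

section
/- For every positive integer g and every integer k ≥ 5, there exists a finite set A ⊆ ℤ such that: (i) A is a B₂[2] set; (ii) A is the union of k B₂°[1] sets; and (iii) A cannot be written as the union of k − 1 B₂°[g] sets. -/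
lemma two_pow_lt' {m n : ℕ} (h : m < n) : (2:ℤ)^m < 2^n :=
  pow_lt_pow_right₀ one_lt_two h

lemma two_pow_le' {m n : ℕ} (h : m ≤ n) : (2:ℤ)^m ≤ 2^n :=
  pow_le_pow_right₀ one_le_two h

lemma two_pow_inj' {m n : ℕ} (h : (2:ℤ)^m = 2^n) : m = n := by
  rcases lt_trichotomy m n with H|H|H
  · exact absurd h (ne_of_lt (two_pow_lt' H))
  · exact H
  · exact absurd h.symm (ne_of_lt (two_pow_lt' H))

lemma pair_ordered {b b' c c' : ℕ} (hb : b ≤ b') (hc : c ≤ c')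
    (h : (2:ℤ)^b + 2^b' = 2^c + 2^c') : b = c ∧ b' = c' := by
  have hbc : b' = c' := by
    rcases lt_trichotomy b' c' with H|H|H
    · exfalso
      have h1 : (2:ℤ)^b ≤ 2^b' := two_pow_le' hb
      have h2 : (2:ℤ)^(b'+1) ≤ 2^c' := two_pow_le' H
      have h3 : (0:ℤ) < 2^c := by positivity
      rw [pow_succ] at h2
      linarith
    · exact H
    · exfalso
      have h1 : (2:ℤ)^c ≤ 2^c' := two_pow_le' hc
      have h2 : (2:ℤ)^(c'+1) ≤ 2^b' := two_pow_le' H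
      have h3 : (0:ℤ) < 2^b := by positivity
      rw [pow_succ] at h2
      linarith
  refine ⟨two_pow_inj' ?_, hbc⟩
  rw [hbc] at h
  linarith

lemma pair_unordered {b b' c c' : ℕ} (h : (2:ℤ)^b + 2^b' = 2^c + 2^c') :
    (b = c ∧ b' = c') ∨ (b = c' ∧ b' = c) := by
  rcases le_total b b' with h1 | h1 <;> rcases le_total c c' with h2 | h2
  · exact Or.inl (pair_ordered h1 h2 h)
  · obtain ⟨e1, e2⟩ := pair_ordered h1 h2 (by linarith)
    exact Or.inr ⟨e1, e2⟩
  · obtain ⟨e1, e2⟩ := pair_ordered h1 h2 (by linarith)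
    exact Or.inr ⟨e2, e1⟩
  · obtain ⟨e1, e2⟩ := pair_ordered h1 h2 (by linarith)
    exact Or.inl ⟨e2, e1⟩

lemma split_eq {k a₁ a₂ b₁ b₂ c₁ c₂ d₁ d₂ : ℕ}
    (ha₁ : k ≤ a₁) (ha₂ : k ≤ a₂) (hb₁ : b₁ < k) (hb₂ : b₂ < k)
    (hc₁ : k ≤ c₁) (hc₂ : k ≤ c₂) (hd₁ : d₁ < k) (hd₂ : d₂ < k)
    (h : (2:ℤ)^a₁ + 2^b₁ + (2^a₂ + 2^b₂) = 2^c₁ + 2^d₁ + (2^c₂ + 2^d₂)) :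
    (2:ℤ)^b₁ + 2^b₂ = 2^d₁ + 2^d₂ ∧ (2:ℤ)^a₁ + 2^a₂ = 2^c₁ + 2^c₂ := by
  have hdvd : (2:ℤ)^k ∣ ((2^d₁ + 2^d₂) - (2^b₁ + 2^b₂)) := by
    have e : (2^d₁ + 2^d₂ : ℤ) - (2^b₁ + 2^b₂) = (2^a₁ + 2^a₂) - (2^c₁ + 2^c₂) := by
      linarith
    rw [e]
    exact dvd_sub (dvd_add (pow_dvd_pow 2 ha₁) (pow_dvd_pow 2 ha₂))
      (dvd_add (pow_dvd_pow 2 hc₁) (pow_dvd_pow 2 hc₂))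
  have hzero : (2^d₁ + 2^d₂ : ℤ) - (2^b₁ + 2^b₂) = 0 := by
    refine Int.eq_zero_of_abs_lt_dvd hdvd ?_
    have l1 : (2:ℤ)^b₁ ≤ 2^(k-1) := two_pow_le' (by omega)
    have l2 : (2:ℤ)^b₂ ≤ 2^(k-1) := two_pow_le' (by omega)
    have l3 : (2:ℤ)^d₁ ≤ 2^(k-1) := two_pow_le' (by omega)
    have l4 : (2:ℤ)^d₂ ≤ 2^(k-1) := two_pow_le' (by omega)
    have p1 : (0:ℤ) < 2^b₁ := by positivity
    have p2 : (0:ℤ) < 2^b₂ := by positivity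
    have p3 : (0:ℤ) < 2^d₁ := by positivity
    have p4 : (0:ℤ) < 2^d₂ := by positivity
    have hk : (2:ℤ)^(k-1) * 2 = 2^k := by
      rw [← pow_succ]
      congr 1
      omega
    rw [abs_lt]
    constructor <;> linarith
  constructor <;> linarith

theorem stmt_7 :
    ∀ g k : ℕ, 0 < g → 5 ≤ k → ∃ A : Set ℤ,
      A.Finite ∧
      IsB2 2 A ∧
      (∃ T : Fin k → Set ℤ, (∀ i, IsB2Circ 1 (T i)) ∧ A = ⋃ i, T i) ∧
      ¬ ∃ T : Fin (k - 1) → Set ℤ, (∀ i, IsB2Circ g (T i)) ∧ A = ⋃ i, T i := by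
  intro g k hg hk
  set N := (k-1)*k*k*g + 1 with hN
  set AF : Finset ℤ :=
    (Finset.Ico k (k+N) ×ˢ Finset.range k).image (fun p => (2:ℤ)^p.1 + 2^p.2) with hAF
  have hmem : ∀ n : ℤ, n ∈ (AF : Set ℤ) ↔
      ∃ a b : ℕ, k ≤ a ∧ a < k + N ∧ b < k ∧ n = 2^a + 2^b := by
    intro n
    constructor
    · intro hn
      simp only [hAF, Finset.coe_image, Set.mem_image, Finset.mem_coe,
        Finset.mem_product, Finset.mem_Ico, Finset.mem_range] at hn
      obtain ⟨⟨a, b⟩, ⟨⟨h1, h2⟩, h3⟩, h4⟩ := hn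
      exact ⟨a, b, h1, h2, h3, h4.symm⟩
    · rintro ⟨a, b, h1, h2, h3, h4⟩
      simp only [hAF, Finset.coe_image, Set.mem_image, Finset.mem_coe,
        Finset.mem_product, Finset.mem_Ico, Finset.mem_range]
      exact ⟨⟨a, b⟩, ⟨⟨h1, h2⟩, h3⟩, h4.symm⟩
  refine ⟨(AF : Set ℤ), AF.finite_toSet, ?_, ?_, ?_⟩
  · -- IsB2 2
    intro ξ
    rcases Set.eq_empty_or_nonempty
      {p : Sym2 ℤ | ∃ a ∈ (AF : Set ℤ), ∃ b ∈ (AF : Set ℤ), p = s(a, b) ∧ a + b = ξ}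
      with he | ⟨p₀, hp₀⟩
    · rw [he]
      simp
    · obtain ⟨x₀, hx₀, y₀, hy₀, hp₀eq, hsum₀⟩ := hp₀
      obtain ⟨α, β, hα1, hα2, hβ, hx₀e⟩ := (hmem x₀).1 hx₀
      obtain ⟨α', β', hα'1, hα'2, hβ', hy₀e⟩ := (hmem y₀).1 hy₀
      have hsub : {p : Sym2 ℤ | ∃ a ∈ (AF : Set ℤ), ∃ b ∈ (AF : Set ℤ), p = s(a, b) ∧ a + b = ξ}
          ⊆ {s(x₀, y₀), s((2:ℤ)^α + 2^β', (2:ℤ)^α' + 2^β)} := by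
        rintro p ⟨x, hx, y, hy, hpe, hsum⟩
        obtain ⟨a, b, ha1, ha2, hb, hxe⟩ := (hmem x).1 hx
        obtain ⟨a', b', ha'1, ha'2, hb', hye⟩ := (hmem y).1 hy
        have heq : (2:ℤ)^a + 2^b + (2^a' + 2^b') = 2^α + 2^β + (2^α' + 2^β') := by
          rw [← hxe, ← hye, ← hx₀e, ← hy₀e, hsum, hsum₀]
        obtain ⟨hsmall, hbig⟩ := split_eq ha1 ha'1 hb hb' hα1 hα'1 hβ hβ' heq
        subst hpe hxe hye hx₀e hy₀e
        rcases pair_unordered hbig with ⟨e1, e2⟩ | ⟨e1, e2⟩ <;>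
          rcases pair_unordered hsmall with ⟨f1, f2⟩ | ⟨f1, f2⟩ <;>
          subst e1 <;> subst e2 <;> subst f1 <;> subst f2
        · left; rfl
        · right; rfl
        · right; exact Sym2.eq_swap
        · left; exact Sym2.eq_swap
      calc _ ≤ ({s(x₀, y₀), s((2:ℤ)^α + 2^β', (2:ℤ)^α' + 2^β)} : Set (Sym2 ℤ)).encard :=
            Set.encard_le_encard hsub
        _ ≤ ({s((2:ℤ)^α + 2^β', (2:ℤ)^α' + 2^β)} : Set (Sym2 ℤ)).encard + 1 :=
            Set.encard_insert_le _ _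
        _ ≤ (2 : ℕ) := by
            rw [Set.encard_singleton]
            norm_num
  · -- union of k B₂°[1] sets
    refine ⟨fun j => {n : ℤ | ∃ a : ℕ, k ≤ a ∧ a < k + N ∧ n = 2^a + 2^(j:ℕ)}, ?_, ?_⟩
    · intro j ξ hξ
      rw [show ((1:ℕ):ℕ∞) = 1 from rfl, Set.encard_le_one_iff]
      rintro ⟨x1, x2⟩ ⟨y1, y2⟩ ⟨⟨a, ha1, ha2, hx1⟩, ⟨a', ha'1, ha'2, hx2⟩, hd⟩
        ⟨⟨c, hc1, hc2, hy1⟩, ⟨c', hc'1, hc'2, hy2⟩, hd'⟩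
      simp only at hd hd'
      subst hx1 hx2 hy1 hy2
      have heq : (2:ℤ)^a + 2^c' = 2^c + 2^a' := by linarith
      rcases pair_unordered heq with ⟨e1, e2⟩ | ⟨e1, e2⟩
      · subst e1; subst e2; rfl
      · exfalso
        apply hξ
        rw [← hd]
        subst e1; subst e2
        ring
    · ext n
      simp only [Set.mem_iUnion, Set.mem_setOf_eq, hmem n]
      constructor
      · rintro ⟨a, b, h1, h2, h3, h4⟩
        exact ⟨⟨b, h3⟩, a, h1, h2, h4⟩
      · rintro ⟨j, a, h1, h2, h3⟩
        exact ⟨a, j, h1, h2, j.isLt, h3⟩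
  · -- not a union of k-1 B₂°[g] sets
    rintro ⟨T, hT, hA⟩
    haveI : NeZero (k - 1) := ⟨by omega⟩
    haveI : NeZero k := ⟨by omega⟩
    have hex : ∀ a ∈ Finset.Ico k (k+N), ∃ t : Fin (k-1) × Fin k × Fin k,
        (t.2.1 : ℕ) < t.2.2 ∧ ((2:ℤ)^a + 2^(t.2.1:ℕ)) ∈ T t.1 ∧
        ((2:ℤ)^a + 2^(t.2.2:ℕ)) ∈ T t.1 := by
      intro a ha
      rw [Finset.mem_Ico] at ha
      have hmem' : ∀ j : Fin k, ∃ i : Fin (k-1), ((2:ℤ)^a + 2^(j:ℕ)) ∈ T i := by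
        intro j
        have hmemA : ((2:ℤ)^a + 2^(j:ℕ)) ∈ (AF : Set ℤ) :=
          (hmem _).2 ⟨a, j, ha.1, ha.2, j.isLt, rfl⟩
        rw [hA] at hmemA
        exact Set.mem_iUnion.1 hmemA
      choose col hcol using hmem'
      have hninj : ¬ Function.Injective col := by
        intro hinj
        have := Fintype.card_le_of_injective col hinj
        simp only [Fintype.card_fin] at this
        omega
      rw [Function.not_injective_iff] at hninj
      obtain ⟨j, j', hcj, hjj'⟩ := hninj
      rcases lt_or_gt_of_ne (show (j:ℕ) ≠ (j':ℕ) from fun h => hjj' (Fin.ext h)) with h | h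
      · exact ⟨⟨col j, j, j'⟩, h, hcol j, hcj ▸ hcol j'⟩
      · exact ⟨⟨col j, j', j⟩, h, hcj ▸ hcol j', hcol j⟩
    classical
    choose! f hf1 hf2 hf3 using hex
    have hcard : (Finset.univ : Finset (Fin (k-1) × Fin k × Fin k)).card * g
        < (Finset.Ico k (k+N)).card := by
      rw [Finset.card_univ, Nat.card_Ico]
      simp only [Fintype.card_prod, Fintype.card_fin]
      have : k + N - k = N := by omega
      rw [this, hN]
      have h1 : (k-1) * (k * k) * g = (k-1)*k*k*g := by ring
      omega
    obtain ⟨t, -, hfib⟩ := Finset.exists_lt_card_fiber_of_mul_lt_card_of_maps_to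
      (fun a _ => Finset.mem_univ (f a)) hcard
    set F := Finset.filter (fun x => f x = t) (Finset.Ico k (k+N)) with hF
    have hFmem : ∀ a ∈ F, a ∈ Finset.Ico k (k+N) ∧ f a = t := by
      intro a ha
      rw [hF, Finset.mem_filter] at ha
      exact ha
    obtain ⟨a₀, ha₀⟩ : F.Nonempty := Finset.card_pos.1 (by omega)
    obtain ⟨ha₀1, ha₀2⟩ := hFmem a₀ ha₀
    have hlt : (t.2.1 : ℕ) < (t.2.2 : ℕ) := ha₀2 ▸ hf1 a₀ ha₀1
    set ξ : ℤ := 2^(t.2.2:ℕ) - 2^(t.2.1:ℕ) with hξdef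
    have hξ : ξ ≠ 0 := by
      have := two_pow_lt' (m := (t.2.1:ℕ)) (n := (t.2.2:ℕ)) hlt
      rw [hξdef]
      intro hc
      linarith
    set img := F.image (fun a => ((2:ℤ)^a + 2^(t.2.2:ℕ), (2:ℤ)^a + 2^(t.2.1:ℕ))) with himg
    have himg_card : img.card = F.card := by
      apply Finset.card_image_of_injOn
      intro a ha a' ha' h
      have h1 : (2:ℤ)^a + 2^(t.2.2:ℕ) = 2^a' + 2^(t.2.2:ℕ) := congrArg Prod.fst h
      have h2 : (2:ℤ)^a = 2^a' := by linarith
      exact two_pow_inj' h2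
    have hsubset : (img : Set (ℤ × ℤ)) ⊆
        {p : ℤ × ℤ | p.1 ∈ T t.1 ∧ p.2 ∈ T t.1 ∧ p.1 - p.2 = ξ} := by
      intro p hp
      simp only [himg, Finset.coe_image, Set.mem_image, Finset.mem_coe] at hp
      obtain ⟨a, ha, hpe⟩ := hp
      obtain ⟨ha1, ha2⟩ := hFmem a ha
      subst hpe
      refine ⟨?_, ?_, by simp [hξdef]⟩
      · exact ha2 ▸ hf3 a ha1
      · exact ha2 ▸ hf2 a ha1
    have hle1 : (img.card : ℕ∞) ≤ g := by
      calc (img.card : ℕ∞) = (img : Set (ℤ × ℤ)).encard :=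
            (Set.encard_coe_eq_coe_finsetCard img).symm
        _ ≤ _ := Set.encard_le_encard hsubset
        _ ≤ g := hT t.1 ξ hξ
    have hle2 : img.card ≤ g := by exact_mod_cast hle1
    omega
end

section
/- Let E = { 5^n − 5^m : n, m ∈ ℕ, 0 ≤ m < n } ⊆ ℤ. Then every finite subset A ⊆ E contains a subset A' ⊆ A that is a B₂[2] set with |A'| ≥ |A|/4. -/
/-- The set `E = { 5^n - 5^m : n, m ∈ ℕ, m < n } ⊆ ℤ`. -/
def Eset : Set ℤ := {x : ℤ | ∃ n m : ℕ, m < n ∧ x = 5 ^ n - 5 ^ m}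


open Multiset

lemma mod5 (s : Multiset ℕ) : (s.map (fun e => 5 ^ e)).sum % 5 = s.count 0 % 5 := by
  induction s using Multiset.induction with
  | empty => simp
  | cons a s ih =>
    rcases Nat.eq_zero_or_pos a with ha | ha
    · subst ha
      simp only [Multiset.map_cons, Multiset.sum_cons, pow_zero, Multiset.count_cons_self]
      omega
    · have h5 : 5 ∣ 5 ^ a := dvd_pow_self 5 ha.ne'
      simp only [Multiset.map_cons, Multiset.sum_cons, Multiset.count_cons_of_ne (by omega : (0:ℕ) ≠ a)]
      omega

lemma key : ∀ N : ℕ, ∀ s t : Multiset ℕ, s.card ≤ 4 → t.card ≤ 4 →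
    (s.map (fun e => 5 ^ e)).sum = N → (t.map (fun e => 5 ^ e)).sum = N → s = t := by
  intro N
  induction N using Nat.strong_induction_on with
  | _ N ih =>
    intro s t hs ht hsN htN
    classical
    have hcs : s.count 0 = t.count 0 := by
      have h1 := mod5 s
      have h2 := mod5 t
      have c1 : s.count 0 ≤ 4 := le_trans (Multiset.count_le_card 0 s) hs
      have c2 : t.count 0 ≤ 4 := le_trans (Multiset.count_le_card 0 t) ht
      omega
        -- decompose
    have hsplit : ∀ u : Multiset ℕ, u = Multiset.replicate (u.count 0) 0 + u.filter (¬ · = 0) := by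
      intro u
      conv_lhs => rw [← Multiset.filter_add_not (· = 0) u]
      rw [Multiset.filter_eq']
    have hpow : ∀ u : Multiset ℕ,
        ((u.filter (¬ · = 0)).map (fun e => 5 ^ e)).sum
          = 5 * (((u.filter (¬ · = 0)).map (fun e => e - 1)).map (fun e => 5 ^ e)).sum := by
      intro u
      rw [Multiset.map_map, ← Multiset.sum_map_mul_left]
      apply congrArg
      apply Multiset.map_congr rfl
      intro e he
      have : ¬ e = 0 := by
        have := Multiset.of_mem_filter he
        simpa using this
      simp only [Function.comp]
      rw [← pow_succ']
      congr 1
      omega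
    have hsum : ∀ u : Multiset ℕ, (u.map (fun e => 5 ^ e)).sum
        = u.count 0 + 5 * (((u.filter (¬ · = 0)).map (fun e => e - 1)).map (fun e => 5 ^ e)).sum := by
      intro u
      conv_lhs => rw [hsplit u]
      rw [Multiset.map_add, Multiset.sum_add, ← hpow u]
      congr 1
      simp [Multiset.map_replicate, Multiset.sum_replicate]
    set X := (((s.filter (¬ · = 0)).map (fun e => e - 1)).map (fun e => 5 ^ e)).sum with hX
    set Y := (((t.filter (¬ · = 0)).map (fun e => e - 1)).map (fun e => 5 ^ e)).sum with hY
    have hNs : N = s.count 0 + 5 * X := by rw [hsum s] at hsN; omega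
    have hNt : N = s.count 0 + 5 * Y := by rw [hsum t] at htN; omega
    have hXY : X = Y := by omega
    -- reconstruction
    have hrec : ∀ u : Multiset ℕ, ((u.filter (¬ · = 0)).map (fun e => e - 1)).map (fun e => e + 1)
        = u.filter (¬ · = 0) := by
      intro u
      rw [Multiset.map_map]
      conv_rhs => rw [← Multiset.map_id' (u.filter (¬ · = 0))]
      apply Multiset.map_congr rfl
      intro e he
      have : ¬ e = 0 := by simpa using Multiset.of_mem_filter he
      simp only [Function.comp]
      omega
    rcases Nat.eq_zero_or_pos X with hX0 | hXpos
    · -- filters are empty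
      have hs0 : s.filter (¬ · = 0) = 0 := by
        by_contra hne
        rcases Multiset.exists_mem_of_ne_zero hne with ⟨e, he⟩
        have : (5:ℕ) ^ (e-1) ≤ X := by
          apply Multiset.single_le_sum (by intro x hx; positivity)
          exact Multiset.mem_map_of_mem _ (Multiset.mem_map_of_mem _ he)
        have : 0 < (5:ℕ) ^ (e-1) := by positivity
        omega
      have ht0 : t.filter (¬ · = 0) = 0 := by
        by_contra hne
        rcases Multiset.exists_mem_of_ne_zero hne with ⟨e, he⟩
        have : (5:ℕ) ^ (e-1) ≤ Y := by
          apply Multiset.single_le_sum (by intro x hx; positivity)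
          exact Multiset.mem_map_of_mem _ (Multiset.mem_map_of_mem _ he)
        have : 0 < (5:ℕ) ^ (e-1) := by positivity
        omega
      rw [hsplit s, hsplit t, hs0, ht0, hcs]
    · have hXN : X < N := by omega
      have hcards : ((s.filter (¬ · = 0)).map (fun e => e - 1)).card ≤ 4 := by
        rw [Multiset.card_map]
        exact le_trans (Multiset.card_le_card (Multiset.filter_le _ _)) hs
      have hcardt : ((t.filter (¬ · = 0)).map (fun e => e - 1)).card ≤ 4 := by
        rw [Multiset.card_map]
        exact le_trans (Multiset.card_le_card (Multiset.filter_le _ _)) ht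
      have heq := ih X hXN _ _ hcards hcardt rfl hXY.symm
      have : s.filter (¬ · = 0) = t.filter (¬ · = 0) := by
        rw [← hrec s, ← hrec t, heq]
      rw [hsplit s, hsplit t, this, hcs]



lemma pair_eq {a b c d : ℕ} (h : ({a, b} : Multiset ℕ) = {c, d}) :
    (a = c ∧ b = d) ∨ (a = d ∧ b = c) := by
  have h' := Multiset.cons_eq_cons.mp h
  rcases h' with ⟨h1, h2⟩ | ⟨hne, cs, h1, h2⟩
  · left
    exact ⟨h1, by simpa using congrArg (fun u => u) (Multiset.singleton_inj.mp h2)⟩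
  · right
    rcases (Multiset.singleton_eq_cons_iff _).mp h1 with ⟨hbc, hcs⟩
    subst hcs
    rcases (Multiset.singleton_eq_cons_iff _).mp h2 with ⟨hda, -⟩
    exact ⟨hda.symm, hbc⟩

lemma quad {S : Set ℕ} {n m n' m' p q p' q' : ℕ}
    (hn : n ∉ S) (hm : m ∈ S) (hn' : n' ∉ S) (hm' : m' ∈ S)
    (hp : p ∉ S) (hq : q ∈ S) (hp' : p' ∉ S) (hq' : q' ∈ S)
    (h : (5:ℤ)^n - 5^m + (5^n' - 5^m') = 5^p - 5^q + (5^p' - 5^q')) :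
    (({n, n'} : Multiset ℕ) = {p, p'}) ∧ (({m, m'} : Multiset ℕ) = {q, q'}) := by
  classical
  have h2 : (5:ℤ)^n + 5^n' + 5^q + 5^q' = 5^p + 5^p' + 5^m + 5^m' := by linarith
  have h3 : (5:ℕ)^n + 5^n' + 5^q + 5^q' = 5^p + 5^p' + 5^m + 5^m' := by exact_mod_cast h2
  have hms : ({n, n', q, q'} : Multiset ℕ) = {p, p', m, m'} := by
    apply key ((5:ℕ)^n + 5^n' + 5^q + 5^q') _ _ (by simp) (by simp)
    · simp [add_assoc]
    · rw [h3]; simp [add_assoc]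
  have hfilt := congrArg (Multiset.filter (· ∈ S)) hms
  have hfilt' := congrArg (Multiset.filter (· ∉ S)) hms
  simp [Multiset.filter_cons, Multiset.filter_singleton, hn, hm, hn', hm',
    hp, hq, hp', hq'] at hfilt hfilt'
  constructor
  · simpa using hfilt'
  · have : ({q, q'} : Multiset ℕ) = {m, m'} := by simpa using hfilt
    exact this.symm





lemma isB2_of (S : Set ℕ) (A' : Set ℤ)
    (h : ∀ a ∈ A', ∃ n m : ℕ, a = 5 ^ n - 5 ^ m ∧ m ∈ S ∧ n ∉ S) :
    IsB2 2 A' := by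
  intro ξ
  set R := {p : Sym2 ℤ | ∃ a ∈ A', ∃ b ∈ A', p = s(a, b) ∧ a + b = ξ} with hR
  rcases Set.eq_empty_or_nonempty R with hre | ⟨p₀, hp₀⟩
  · rw [hre]; simp
  · obtain ⟨a, ha, b, hb, hp₀eq, hab⟩ := hp₀
    obtain ⟨n, m, hae, hmS, hnS⟩ := h a ha
    obtain ⟨n', m', hbe, hm'S, hn'S⟩ := h b hb
    have hsub : R ⊆ {s(a, b), s((5:ℤ)^n - 5^m', (5:ℤ)^n' - 5^m)} := by
      rintro p ⟨c, hc, d, hd, hpe, hcd⟩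
      obtain ⟨u, v, hce, hvS, huS⟩ := h c hc
      obtain ⟨u', v', hde, hv'S, hu'S⟩ := h d hd
      have heq : (5:ℤ)^n - 5^m + (5^n' - 5^m') = 5^u - 5^v + (5^u' - 5^v') := by
        rw [← hae, ← hbe, ← hce, ← hde, hab, hcd]
      obtain ⟨h1, h2⟩ := quad hnS hmS hn'S hm'S huS hvS hu'S hv'S heq
      have hU := pair_eq h1.symm
      have hV := pair_eq h2.symm
      subst hce hde hpe hae hbe
      rcases hU with ⟨hu1, hu2⟩ | ⟨hu1, hu2⟩ <;> rcases hV with ⟨hv1, hv2⟩ | ⟨hv1, hv2⟩ <;>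
        subst hu1 hu2 hv1 hv2
      · left; rfl
      · right; rfl
      · right; exact Sym2.eq_swap
      · left; exact Sym2.eq_swap
    calc R.encard ≤ ({s(a, b), s((5:ℤ)^n - 5^m', (5:ℤ)^n' - 5^m)} : Set (Sym2 ℤ)).encard :=
          Set.encard_le_encard hsub
      _ ≤ 2 := by
          apply le_trans (Set.encard_insert_le _ _)
          rw [Set.encard_singleton]
          decide




theorem stmt_11 :
    ∀ A : Set ℤ, A ⊆ Eset → A.Finite →
      ∃ A' ⊆ A, IsB2 2 A' ∧ (A.ncard : ℝ) / 4 ≤ (A'.ncard : ℝ) := by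
  intro A hAE hA
  classical
  set F := hA.toFinset with hF
  have hcoe : (↑F : Set ℤ) = A := Set.Finite.coe_toFinset hA
  have hex : ∀ a : ℤ, ∃ nm : ℕ × ℕ, a ∈ A → nm.2 < nm.1 ∧ a = 5 ^ nm.1 - 5 ^ nm.2 := by
    intro a
    by_cases ha : a ∈ A
    · obtain ⟨n, m, hmn, he⟩ := hAE ha
      exact ⟨(n, m), fun _ => ⟨hmn, he⟩⟩
    · exact ⟨(0, 0), fun h => absurd h ha⟩
  choose f hf using hex
  set V := F.image (fun a => (f a).1) ∪ F.image (fun a => (f a).2) with hV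
  set Ω := V.powerset with hΩ
  set P : ℤ → Finset ℕ → Prop := fun a S => (f a).2 ∈ S ∧ (f a).1 ∉ S with hP
  -- per-element count
  have hcount : ∀ a ∈ F, (Ω.filter (fun S => P a S)).card = 2 ^ (V.card - 2) := by
    intro a haF
    have haA : a ∈ A := by rwa [hF, Set.Finite.mem_toFinset] at haF
    obtain ⟨hlt, -⟩ := hf a haA
    set x := (f a).2
    set y := (f a).1
    have hxy : x ≠ y := by omega
    have hxV : x ∈ V := Finset.mem_union_right _ (Finset.mem_image_of_mem _ haF)
    have hyV : y ∈ V := Finset.mem_union_left _ (Finset.mem_image_of_mem _ haF)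
    have hcard2 : ((V.erase x).erase y).card = V.card - 2 := by
      rw [Finset.card_erase_of_mem (Finset.mem_erase.mpr ⟨hxy.symm, hyV⟩),
        Finset.card_erase_of_mem hxV]
      omega
    rw [← hcard2, ← Finset.card_powerset]
    apply Finset.card_bij' (fun S _ => S.erase x) (fun T _ => insert x T)
    · intro S hS
      rw [Finset.mem_filter] at hS
      exact Finset.insert_erase hS.2.1
    · intro T hT
      rw [Finset.mem_powerset, Finset.subset_erase, Finset.subset_erase] at hT
      exact Finset.erase_insert hT.1.2
    · intro S hS
      rw [Finset.mem_filter, hΩ, Finset.mem_powerset] at hS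
      obtain ⟨hSV, hxS, hyS⟩ := hS
      rw [Finset.mem_powerset, Finset.subset_erase, Finset.subset_erase]
      exact ⟨⟨(Finset.erase_subset _ _).trans hSV, Finset.notMem_erase _ _⟩,
        fun hy => hyS (Finset.mem_of_mem_erase hy)⟩
    · intro T hT
      rw [Finset.mem_powerset, Finset.subset_erase, Finset.subset_erase] at hT
      obtain ⟨⟨hTV, hxT⟩, hyT⟩ := hT
      rw [Finset.mem_filter, hΩ, Finset.mem_powerset]
      refine ⟨Finset.insert_subset hxV hTV, Finset.mem_insert_self _ _, ?_⟩
      rw [Finset.mem_insert]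
      push_neg
      exact ⟨hxy.symm, hyT⟩
  -- double counting
  have hdouble : ∑ S ∈ Ω, (F.filter (fun a => P a S)).card = F.card * 2 ^ (V.card - 2) := by
    have h1 : ∀ S ∈ Ω, (F.filter (fun a => P a S)).card = ∑ a ∈ F, if P a S then 1 else 0 :=
      fun S _ => Finset.card_filter _ _
    rw [Finset.sum_congr rfl h1, Finset.sum_comm]
    have h2 : ∀ a ∈ F, ∑ S ∈ Ω, (if P a S then 1 else 0) = 2 ^ (V.card - 2) := by
      intro a haF
      rw [← Finset.card_filter]
      exact hcount a haF
    rw [Finset.sum_congr rfl h2, Finset.sum_const, smul_eq_mul]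
  -- find a good S
  have hgood : ∃ S ∈ Ω, F.card ≤ 4 * (F.filter (fun a => P a S)).card := by
    by_contra hcon
    push_neg at hcon
    rcases Nat.eq_zero_or_pos F.card with hF0 | hFpos
    · have := hcon ∅ (Finset.empty_mem_powerset V)
      omega
    · obtain ⟨a, haF⟩ := Finset.card_pos.mp hFpos
      have haA : a ∈ A := by rwa [hF, Set.Finite.mem_toFinset] at haF
      obtain ⟨hlt, -⟩ := hf a haA
      have hV2 : 2 ≤ V.card := by
        have hsub : ({(f a).1, (f a).2} : Finset ℕ) ⊆ V := by
          intro z hz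
          rw [Finset.mem_insert, Finset.mem_singleton] at hz
          rcases hz with hz | hz
          · exact hz ▸ Finset.mem_union_left _ (Finset.mem_image_of_mem _ haF)
          · exact hz ▸ Finset.mem_union_right _ (Finset.mem_image_of_mem _ haF)
        have : ({(f a).1, (f a).2} : Finset ℕ).card = 2 := by
          rw [Finset.card_insert_of_notMem (by simp; omega), Finset.card_singleton]
        have hle := Finset.card_le_card hsub
        omega
      have hΩcard : Ω.card = 2 ^ V.card := Finset.card_powerset V
      have hKey : ∑ S ∈ Ω, (4 * (F.filter (fun a => P a S)).card + 1) ≤ Ω.card * F.card := by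
        calc ∑ S ∈ Ω, (4 * (F.filter (fun a => P a S)).card + 1)
            ≤ ∑ _S ∈ Ω, F.card := Finset.sum_le_sum (fun S hS => by
              have := hcon S hS; omega)
          _ = Ω.card * F.card := by rw [Finset.sum_const, smul_eq_mul]
      have hsplit : ∑ S ∈ Ω, (4 * (F.filter (fun a => P a S)).card + 1)
          = 4 * (F.card * 2 ^ (V.card - 2)) + Ω.card := by
        rw [Finset.sum_add_distrib, ← Finset.mul_sum, hdouble, Finset.sum_const, smul_eq_mul,
          mul_one]
      have hpow : (2:ℕ) ^ V.card = 4 * 2 ^ (V.card - 2) := by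
        have h : V.card - 2 + 2 = V.card := by omega
        calc (2:ℕ) ^ V.card = 2 ^ (V.card - 2 + 2) := by rw [h]
          _ = 4 * 2 ^ (V.card - 2) := by rw [pow_add]; ring
      have hKpos : 0 < 2 ^ (V.card - 2) := Nat.pow_pos (by norm_num)
      rw [hsplit, hΩcard, hpow] at hKey
      nlinarith
  obtain ⟨S, hSΩ, hScard⟩ := hgood
  refine ⟨↑(F.filter (fun a => P a S)), ?_, ?_, ?_⟩
  · intro z hz
    rw [Finset.mem_coe, Finset.mem_filter] at hz
    rw [← hcoe]
    exact hz.1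
  · apply isB2_of (↑S : Set ℕ)
    intro a ha
    rw [Finset.mem_coe, Finset.mem_filter] at ha
    obtain ⟨haF, hm, hn⟩ := ha
    have haA : a ∈ A := by rwa [hF, Set.Finite.mem_toFinset] at haF
    exact ⟨(f a).1, (f a).2, (hf a haA).2, by simpa using hm, by simpa using hn⟩
  · have h1 : A.ncard = F.card := by rw [← hcoe, Set.ncard_coe_finset]
    have h2 : (↑(F.filter (fun a => P a S)) : Set ℤ).ncard = (F.filter (fun a => P a S)).card :=
      Set.ncard_coe_finset _
    rw [h1, h2, div_le_iff₀ (by norm_num : (0:ℝ) < 4)]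
    have : (F.card : ℝ) ≤ 4 * (F.filter (fun a => P a S)).card := by exact_mod_cast hScard
    linarith
end

section
/- Let E = { 5^n − 5^m : n, m ∈ ℕ, 0 ≤ m < n } ⊆ ℤ. Then for all positive integers k and g, there do not exist sets G₁, …, G_k ⊆ ℤ, each a B₂[g] set, with E = G₁ ∪ ⋯ ∪ G_k. -/
lemma infinite_fiber_sub {k : ℕ} (c : ℕ → Fin k) (X : Set ℕ) (hX : X.Infinite) :
    ∃ i, {x ∈ X | c x = i}.Infinite := by
  by_contra h
  push_neg at h
  have hsub : X ⊆ ⋃ i, {x ∈ X | c x = i} := fun x hx => Set.mem_iUnion.2 ⟨c x, hx, rfl⟩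
  exact hX ((Set.finite_iUnion h).subset hsub)

lemma step_lemma {k : ℕ} (c : ℕ → ℕ → Fin k) (X : Set ℕ) (hX : X.Infinite) :
    ∃ p : ℕ × Fin k × Set ℕ, p.1 ∈ X ∧ p.2.2 ⊆ X ∧ p.2.2.Infinite ∧
      (∀ y ∈ p.2.2, p.1 < y) ∧ (∀ y ∈ p.2.2, c p.1 y = p.2.1) := by
  obtain ⟨a, ha⟩ := hX.nonempty
  have h1 : (X \ Set.Iic a).Infinite := hX.diff (Set.finite_Iic a)
  obtain ⟨i, hi⟩ := infinite_fiber_sub (c a) _ h1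
  refine ⟨⟨a, i, {x ∈ X \ Set.Iic a | c a x = i}⟩, ha, ?_, hi, ?_, ?_⟩
  · exact fun y hy => hy.1.1
  · exact fun y hy => lt_of_not_ge hy.1.2
  · exact fun y hy => hy.2

/-- Infinite Ramsey theorem for pairs (in the form needed here). -/
lemma ramsey2 {k : ℕ} (c : ℕ → ℕ → Fin k) :
    ∃ (a : ℕ → ℕ) (i : Fin k), StrictMono a ∧ ∀ p q, p < q → c (a p) (a q) = i := by
  classical
  rcases Nat.eq_zero_or_pos k with hk | hk
  · subst hk; exact (c 0 0).elim0
  have : Inhabited (Fin k) := ⟨⟨0, hk⟩⟩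
  choose! f hf1 hf2 hf3 hf4 hf5 using step_lemma c
  -- states
  let St : ℕ → Set ℕ := fun n => Nat.rec Set.univ (fun _ X => (f X).2.2) n
  have hSt0 : St 0 = Set.univ := rfl
  have hStS : ∀ n, St (n+1) = (f (St n)).2.2 := fun n => rfl
  have hInf : ∀ n, (St n).Infinite := by
    intro n; induction n with
    | zero => exact Set.infinite_univ
    | succ n ih => rw [hStS]; exact hf3 _ ih
  set a : ℕ → ℕ := fun n => (f (St n)).1 with ha
  set col : ℕ → Fin k := fun n => (f (St n)).2.1 with hcol
  have hmemS : ∀ n, a n ∈ St n := fun n => hf1 _ (hInf n)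
  have hsub : ∀ n, St (n+1) ⊆ St n := fun n => by rw [hStS]; exact hf2 _ (hInf n)
  have hlt : ∀ n, ∀ y ∈ St (n+1), a n < y := fun n => by rw [hStS]; exact hf4 _ (hInf n)
  have hc : ∀ n, ∀ y ∈ St (n+1), c (a n) y = col n := fun n => by
    rw [hStS]; exact hf5 _ (hInf n)
  have hchain : ∀ p q, p < q → a q ∈ St (p+1) := by
    intro p q hpq
    have : ∀ r, p + 1 ≤ r → St r ⊆ St (p+1) := by
      intro r hr
      induction r with
      | zero => omega
      | succ r ih =>
        rcases Nat.lt_or_ge (p+1) (r+1) with h | h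
        · exact (hsub r).trans (ih (by omega))
        · have : p + 1 = r + 1 := by omega
          rw [this]
    exact this q hpq (hmemS q)
  -- pigeonhole on colors
  obtain ⟨ic, hic⟩ := infinite_fiber_sub col Set.univ Set.infinite_univ
  have hgt : ∀ n : ℕ, ∃ m, m ∈ {x ∈ Set.univ | col x = ic} ∧ n < m := by
    intro n; obtain ⟨m, hm, hm2⟩ := hic.exists_gt n; exact ⟨m, hm, hm2⟩
  choose J hJ1 hJ2 using hgt
  let e : ℕ → ℕ := fun n => Nat.rec (J 0) (fun _ x => J x) n
  have he0 : col (e 0) = ic := (hJ1 0).2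
  have heS : ∀ n, e (n+1) = J (e n) := fun n => rfl
  have hecol : ∀ n, col (e n) = ic := by
    intro n; cases n with
    | zero => exact he0
    | succ n => rw [heS]; exact (hJ1 (e n)).2
  have hemono : StrictMono e := strictMono_nat_of_lt_succ (fun n => by rw [heS]; exact hJ2 (e n))
  refine ⟨fun n => a (e n), ic, ?_, ?_⟩
  · intro p q hpq
    exact hlt (e p) _ (hchain (e p) (e q) (hemono hpq))
  · intro p q hpq
    rw [hc (e p) _ (hchain (e p) (e q) (hemono hpq))]
    exact hecol p

lemma pow5_inj : Function.Injective (fun n : ℕ => (5:ℤ)^n) :=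
  pow_right_injective₀ (by norm_num) (by norm_num)

lemma pow5_mono : StrictMono (fun n : ℕ => (5:ℤ)^n) :=
  fun _ _ h => pow_lt_pow_right₀ (by norm_num) h

theorem stmt_12 :
    ∀ k g : ℕ, 0 < k → 0 < g →
      ¬ ∃ G : Fin k → Set ℤ, (∀ i, IsB2 g (G i)) ∧ Eset = ⋃ i, G i := by
  intro k g hk hg ⟨G, hB2, hE⟩
  classical
  have hmem : ∀ m n : ℕ, m < n → ∃ i, (5:ℤ)^n - 5^m ∈ G i := by
    intro m n h
    have : (5:ℤ)^n - 5^m ∈ Eset := ⟨n, m, h, rfl⟩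
    rw [hE] at this
    exact Set.mem_iUnion.mp this
  let c : ℕ → ℕ → Fin k := fun m n =>
    if h : m < n then (hmem m n h).choose else ⟨0, hk⟩
  have hc : ∀ m n (h : m < n), (5:ℤ)^n - 5^m ∈ G (c m n) := by
    intro m n h
    simp only [c, dif_pos h]
    exact (hmem m n h).choose_spec
  obtain ⟨e, col, hemono, hcol⟩ := ramsey2 c
  have hmemcol : ∀ p q, p < q → (5:ℤ)^(e q) - 5^(e p) ∈ G col := by
    intro p q h
    rw [← hcol p q h]
    exact hc _ _ (hemono h)
  -- the target sum
  set ξ : ℤ := 5^(e (g+2)) - 5^(e 0) with hξ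
  set T : Set (Sym2 ℤ) :=
    {p : Sym2 ℤ | ∃ a ∈ G col, ∃ b ∈ G col, p = s(a, b) ∧ a + b = ξ} with hT
  let f : Fin (g+1) → Sym2 ℤ := fun s =>
    s(5^(e (g+2)) - 5^(e (s.1+1)), 5^(e (s.1+1)) - 5^(e 0))
  have hrange : ∀ s, f s ∈ T := by
    intro s
    refine ⟨_, hmemcol (s.1+1) (g+2) (by omega), _, hmemcol 0 (s.1+1) (by omega), rfl, by ring⟩
  have hfi : Function.Injective f := by
    intro s t hst
    simp only [f, Sym2.eq, Sym2.rel_iff', Prod.mk.injEq, Prod.swap_prod_mk] at hst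
    rcases hst with ⟨h1, _⟩ | ⟨h1, h2⟩
    · have : (5:ℤ)^(e (s.1+1)) = 5^(e (t.1+1)) := by linarith
      have := hemono.injective (pow5_inj this)
      exact Fin.ext (by omega)
    · -- swap case: 5^N - 5^(e (s+1)) = 5^(e (t+1)) - 5^(e 0), impossible
      exfalso
      have hs : e (s.1+1) < e (g+2) := hemono (by omega)
      have ht : e (t.1+1) < e (g+2) := hemono (by omega)
      have h5s : (5:ℤ)^(e (s.1+1)) < 5^(e (g+2)) := pow5_mono hs
      have h5t : (5:ℤ)^(e (t.1+1)) < 5^(e (g+2)) := pow5_mono ht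
      -- more precisely, sums are too small
      have hmax : (5:ℤ)^(e (s.1+1)) + 5^(e (t.1+1)) < 5^(e (g+2)) := by
        set M := max (e (s.1+1)) (e (t.1+1)) with hM
        have hM1 : M + 1 ≤ e (g+2) := by
          rcases max_cases (e (s.1+1)) (e (t.1+1)) with ⟨h, _⟩ | ⟨h, _⟩ <;> omega
        have h1 : (5:ℤ)^(e (s.1+1)) ≤ 5^M :=
          pow_le_pow_right₀ (by norm_num) (le_max_left _ _)
        have h2 : (5:ℤ)^(e (t.1+1)) ≤ 5^M :=
          pow_le_pow_right₀ (by norm_num) (le_max_right _ _)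
        have h3 : (5:ℤ)^(M+1) ≤ 5^(e (g+2)) := pow_le_pow_right₀ (by norm_num) hM1
        have h4 : (0:ℤ) < 5^M := by positivity
        calc (5:ℤ)^(e (s.1+1)) + 5^(e (t.1+1)) ≤ 5^M + 5^M := by linarith
          _ < 5^(M+1) := by rw [pow_succ]; linarith
          _ ≤ 5^(e (g+2)) := h3
      have h0 : (0:ℤ) < 5^(e 0) := by positivity
      linarith
  have hle : ((g:ℕ∞)+1) ≤ T.encard := by
    have h1 : Set.range f ⊆ T := Set.range_subset_iff.mpr hrange
    have h2 := Set.encard_le_encard h1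
    rw [← Set.image_univ, hfi.encard_image, Set.encard_univ] at h2
    simpa using h2
  have hge : T.encard ≤ g := hB2 col ξ
  have : ((g+1:ℕ):ℕ∞) ≤ (g:ℕ∞) := by exact_mod_cast hle.trans hge
  rw [Nat.cast_le] at this
  omega
end

section
/- Let g and d be positive integers and let S ⊆ ℤ^d be a B₂°[g] set. Then for every finitely supported function f : ℤ^d → ℂ whose support is contained in S, Σ_{ν ∈ ℤ^d} | Σ_{ξ ∈ ℤ^d, ξ ∈ S, ξ − ν ∈ S} f(ξ)·conj(f(ξ − ν)) |² ≤ (1 + g²)·( Σ_{ξ ∈ ℤ^d} |f(ξ)|² )². (By Parseval, the left-hand side equals the fourth power of the L⁴ norm of the trigonometric polynomial with coefficients f, so this shows every B₂°[g] set is a Λ(4) set with constant at most (1+g²)^{1/4}.) -/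
open scoped Pointwise Classical

theorem stmt_14 (g d : ℕ) (hg : 0 < g) (hd : 0 < d)
    (S : Set (Fin d → ℤ)) (hS : IsB2Circ g S)
    (f : (Fin d → ℤ) →₀ ℂ) (hsupp : (↑f.support : Set (Fin d → ℤ)) ⊆ S) :
    ∑ ν ∈ f.support - f.support,
        ‖∑ ξ ∈ f.support.filter (fun ξ => ξ ∈ S ∧ ξ - ν ∈ S),
            f ξ * (starRingEnd ℂ) (f (ξ - ν))‖ ^ 2
      ≤ (1 + (g : ℝ) ^ 2) * (∑ ξ ∈ f.support, ‖f ξ‖ ^ 2) ^ 2 := by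
  classical
  set E : ℝ := ∑ ξ ∈ f.support, ‖f ξ‖ ^ 2 with hE
  have hEnn : 0 ≤ E := Finset.sum_nonneg fun _ _ => sq_nonneg _
  set D : Finset (Fin d → ℤ) := f.support - f.support with hD
  set T : (Fin d → ℤ) → Finset (Fin d → ℤ) :=
    fun ν => f.support.filter (fun ξ => ξ ∈ S ∧ ξ - ν ∈ S) with hT
  set t : (Fin d → ℤ) → ℝ :=
    fun ν => ‖∑ ξ ∈ T ν, f ξ * (starRingEnd ℂ) (f (ξ - ν))‖ ^ 2 with ht
  -- cardinality bound for ν ≠ 0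
  have hcard : ∀ ν : Fin d → ℤ, ν ≠ 0 → (T ν).card ≤ g := by
    intro ν hν
    have hinj : Function.Injective (fun ξ : Fin d → ℤ => (ξ, ξ - ν)) :=
      fun a b h => congrArg Prod.fst h
    have hsub : (((T ν).image (fun ξ => (ξ, ξ - ν))) : Set ((Fin d → ℤ) × (Fin d → ℤ)))
        ⊆ {p : (Fin d → ℤ) × (Fin d → ℤ) | p.1 ∈ S ∧ p.2 ∈ S ∧ p.1 - p.2 = ν} := by
      intro p hp
      simp only [Finset.coe_image, Set.mem_image, Finset.mem_coe] at hp
      obtain ⟨ξ, hξ, rfl⟩ := hp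
      have h := Finset.mem_filter.1 hξ
      exact ⟨h.2.1, h.2.2, by simp⟩
    have h1 : ((((T ν).image (fun ξ => (ξ, ξ - ν))) :
        Set ((Fin d → ℤ) × (Fin d → ℤ)))).encard ≤ g :=
      (Set.encard_mono hsub).trans (hS ν hν)
    rw [Set.encard_coe_eq_coe_finsetCard, Finset.card_image_of_injective _ hinj] at h1
    exact_mod_cast h1
  -- bound on partial ℓ² sums after translation
  have htrans : ∀ (D' : Finset (Fin d → ℤ)) (ξ : Fin d → ℤ),
      (∑ ν ∈ D', ‖f (ξ - ν)‖ ^ 2) ≤ E := by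
    intro D' ξ
    have hinj : ∀ x ∈ D', ∀ y ∈ D', ξ - x = ξ - y → x = y :=
      fun x _ y _ h => sub_right_injective h
    have himg := Finset.sum_image (s := D') (g := fun ν => ξ - ν)
      (f := fun η => ‖f η‖ ^ 2) hinj
    rw [← himg]
    set I := D'.image (fun ν => ξ - ν)
    have h1 : (∑ η ∈ I, ‖f η‖ ^ 2) = ∑ η ∈ I ∩ f.support, ‖f η‖ ^ 2 := by
      refine (Finset.sum_subset (Finset.inter_subset_left) ?_).symm
      intro η hη hη'
      have : η ∉ f.support := fun h => hη' (Finset.mem_inter.2 ⟨hη, h⟩)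
      simp [Finsupp.notMem_support_iff.1 this]
    rw [h1]
    exact Finset.sum_le_sum_of_subset_of_nonneg (Finset.inter_subset_right)
      (fun _ _ _ => sq_nonneg _)
  -- per-ν bound for ν ≠ 0
  have hterm : ∀ ν : Fin d → ℤ, ν ≠ 0 →
      t ν ≤ (g : ℝ) * ∑ ξ ∈ f.support, ‖f ξ‖ ^ 2 * ‖f (ξ - ν)‖ ^ 2 := by
    intro ν hν
    have h1 : ‖∑ ξ ∈ T ν, f ξ * (starRingEnd ℂ) (f (ξ - ν))‖
        ≤ ∑ ξ ∈ T ν, ‖f ξ‖ * ‖f (ξ - ν)‖ := by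
      refine (norm_sum_le _ _).trans (le_of_eq (Finset.sum_congr rfl ?_))
      intro ξ _
      rw [norm_mul, RCLike.norm_conj]
    have h2 : t ν ≤ (∑ ξ ∈ T ν, ‖f ξ‖ * ‖f (ξ - ν)‖) ^ 2 := by
      exact pow_le_pow_left₀ (norm_nonneg _) h1 2
    have h3 : (∑ ξ ∈ T ν, ‖f ξ‖ * ‖f (ξ - ν)‖) ^ 2
        ≤ (T ν).card * ∑ ξ ∈ T ν, (‖f ξ‖ * ‖f (ξ - ν)‖) ^ 2 :=
      sq_sum_le_card_mul_sum_sq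
    have h4 : (∑ ξ ∈ T ν, (‖f ξ‖ * ‖f (ξ - ν)‖) ^ 2)
        ≤ ∑ ξ ∈ f.support, ‖f ξ‖ ^ 2 * ‖f (ξ - ν)‖ ^ 2 := by
      refine le_trans (le_of_eq (Finset.sum_congr rfl fun ξ _ => mul_pow _ _ 2)) ?_
      exact Finset.sum_le_sum_of_subset_of_nonneg (Finset.filter_subset _ _)
        (fun _ _ _ => mul_nonneg (sq_nonneg _) (sq_nonneg _))
    calc t ν ≤ (T ν).card * ∑ ξ ∈ T ν, (‖f ξ‖ * ‖f (ξ - ν)‖) ^ 2 := h2.trans h3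
      _ ≤ (g : ℝ) * ∑ ξ ∈ f.support, ‖f ξ‖ ^ 2 * ‖f (ξ - ν)‖ ^ 2 := by
          refine mul_le_mul (by exact_mod_cast hcard ν hν)
            h4 (Finset.sum_nonneg fun _ _ => sq_nonneg _) (Nat.cast_nonneg g)
  -- the ν = 0 term
  have h0 : t 0 ≤ E ^ 2 := by
    have h1 : ‖∑ ξ ∈ T 0, f ξ * (starRingEnd ℂ) (f (ξ - 0))‖ ≤ E := by
      refine (norm_sum_le _ _).trans ?_
      have : ∀ ξ ∈ T 0, ‖f ξ * (starRingEnd ℂ) (f (ξ - 0))‖ = ‖f ξ‖ ^ 2 := by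
        intro ξ _
        rw [norm_mul, RCLike.norm_conj, sub_zero, sq]
      rw [Finset.sum_congr rfl this]
      exact Finset.sum_le_sum_of_subset_of_nonneg (Finset.filter_subset _ _)
        (fun _ _ _ => sq_nonneg _)
    exact pow_le_pow_left₀ (norm_nonneg _) h1 2
  -- sum over nonzero ν
  have hne : (∑ ν ∈ D.erase 0, t ν) ≤ (g : ℝ) * E ^ 2 := by
    calc (∑ ν ∈ D.erase 0, t ν)
        ≤ ∑ ν ∈ D.erase 0, (g : ℝ) * ∑ ξ ∈ f.support, ‖f ξ‖ ^ 2 * ‖f (ξ - ν)‖ ^ 2 := by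
          refine Finset.sum_le_sum fun ν hν => hterm ν (Finset.ne_of_mem_erase hν)
      _ = (g : ℝ) * ∑ ξ ∈ f.support, ‖f ξ‖ ^ 2 * ∑ ν ∈ D.erase 0, ‖f (ξ - ν)‖ ^ 2 := by
          rw [← Finset.mul_sum, Finset.sum_comm]
          congr 1
          exact Finset.sum_congr rfl fun ξ _ => (Finset.mul_sum _ _ _).symm
      _ ≤ (g : ℝ) * ∑ ξ ∈ f.support, ‖f ξ‖ ^ 2 * E := by
          refine mul_le_mul_of_nonneg_left (Finset.sum_le_sum fun ξ _ => ?_)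
            (Nat.cast_nonneg g)
          exact mul_le_mul_of_nonneg_left (htrans _ ξ) (sq_nonneg _)
      _ = (g : ℝ) * E ^ 2 := by rw [← Finset.sum_mul, ← hE, sq]
  -- combine
  have hsplit : (∑ ν ∈ D, t ν) ≤ t 0 + (∑ ν ∈ D.erase 0, t ν) := by
    by_cases h : (0 : Fin d → ℤ) ∈ D
    · rw [← Finset.add_sum_erase _ _ h]
    · rw [Finset.erase_eq_of_notMem h]
      exact le_add_of_nonneg_left (sq_nonneg _)
  have hgle : (g : ℝ) ≤ (g : ℝ) ^ 2 := by
    have : (1 : ℝ) ≤ (g : ℝ) := by exact_mod_cast hg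
    nlinarith
  calc (∑ ν ∈ D, t ν) ≤ t 0 + (∑ ν ∈ D.erase 0, t ν) := hsplit
    _ ≤ E ^ 2 + (g : ℝ) * E ^ 2 := add_le_add h0 hne
    _ ≤ E ^ 2 + (g : ℝ) ^ 2 * E ^ 2 := by nlinarith [sq_nonneg E]
    _ = (1 + (g : ℝ) ^ 2) * E ^ 2 := by ring
end
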